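/- arXiv:1502.04382 — 7 statements merged into one kernel-verified Lean document; each statement's English description precedes it below -/
import Mathlib

section
/- Let λ(G) be a temporal graph, where G = (V,E) is a digraph, and let s, v ∈ V be two distinguished vertices. Then the maximum number of pairwise out-disjoint journeys from s to v in λ(G) is equal to the minimum number of node departure times that need to be removed in order to leave no journey from s to v. -/
/-!
Node departure times `(u, t)` are the vertices of a finite digraph, the *departure digraph*, with
an edge `(u, t) → (w, t')` when some edge `u → w` carries the label `t` and `t < t'`. The
departures of a journey from `s` to `v` form a walk in it from a departure at `s` to a departure
along an edge into `v`, every such walk arises from a journey, and journeys are out-disjoint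
exactly when their walks are vertex-disjoint. So the theorem is Menger's theorem for disjoint
`A`–`B` walks in a finite digraph, proved by induction on the number of edges (Diestel, *Graph
Theory*, Thm. 3.3.1, second proof): if deleting an edge `x → y` leaves an `A`–`B` separator `S`
with `|S| < k`, then `S ∪ {x}` and `S ∪ {y}` are separators of size `k` of the whole digraph, and
`k` disjoint `A`–`(S ∪ {x})` walks and `k` disjoint `(S ∪ {y})`–`B` walks in the smaller digraph
can be glued, since they meet only in `S`.
-/

/-- A journey (time-respecting path) in a temporal digraph with edge relation `E`
and labeling `lab`, from `s` to `v`: a walk along edges of the digraph together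
with a strictly increasing sequence of labels, each chosen from the label set of
the corresponding edge. -/
structure Journey {V : Type*} (E : V → V → Prop) (lab : V → V → Finset ℕ)
    (s v : V) where
  len : ℕ
  vert : Fin (len + 1) → V
  lbl : Fin len → ℕ
  first : vert 0 = s
  last : vert (Fin.last len) = v
  edge : ∀ i : Fin len, E (vert i.castSucc) (vert i.succ)
  mem : ∀ i : Fin len, lbl i ∈ lab (vert i.castSucc) (vert i.succ)
  mono : StrictMono lbl

/-- Two journeys are out-disjoint if they never leave the same node at the same time. -/
def OutDisjoint {V : Type*} {E : V → V → Prop} {lab : V → V → Finset ℕ}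
    {s₁ v₁ s₂ v₂ : V} (J : Journey E lab s₁ v₁) (J' : Journey E lab s₂ v₂) : Prop :=
  ∀ (i : Fin J.len) (j : Fin J'.len),
    J.vert i.castSucc = J'.vert j.castSucc → J.lbl i ≠ J'.lbl j

/-- The labeling obtained by removing the node departure times in `D`:
for `(u, t) ∈ D`, the label `t` is deleted from all edges leaving `u`. -/
def removeDepartures {V : Type*} [DecidableEq V] (lab : V → V → Finset ℕ)
    (D : Finset (V × ℕ)) : V → V → Finset ℕ :=
  fun u w => (lab u w).filter (fun t => (u, t) ∉ D)

open Function

namespace List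

variable {α : Type*} {l p q : List α} {c d u : α}

theorem IsChain.imp_of_mem_dropLast_imp {R S : α → α → Prop}
    (H : ∀ a b, a ∈ l.dropLast → R a b → S a b) (h : l.IsChain R) : l.IsChain S := by
  rw [← isChain_reverse] at h ⊢
  exact h.imp_of_mem_tail_imp fun b a _ ha => H a b (by simpa using ha)

theorem exists_prefix_to_first {P : α → Prop} (h : ∃ x ∈ l, P x) :
    ∃ p u, p ++ [u] <+: l ∧ P u ∧ ∀ z ∈ p, ¬ P z := by
  induction l with
  | nil => simp at h
  | cons a l ih =>
    by_cases ha : P a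
    · exact ⟨[], a, by simp, ha, by simp⟩
    obtain ⟨p, u, hpre, hu, hp⟩ := ih (by simpa [ha] using h)
    exact ⟨a :: p, u, by simpa using hpre, hu, by simpa [ha] using hp⟩

theorem exists_suffix_from_last {P : α → Prop} (h : ∃ x ∈ l, P x) :
    ∃ u q, u :: q <:+ l ∧ P u ∧ ∀ z ∈ q, ¬ P z := by
  induction l with
  | nil => simp at h
  | cons a l ih =>
    by_cases hl : ∃ x ∈ l, P x
    · obtain ⟨u, q, hsuf, hu, hq⟩ := ih hl
      exact ⟨u, q, hsuf.trans (suffix_cons a l), hu, hq⟩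
    push Not at hl
    obtain ⟨x, hx, hPx⟩ := h
    rcases mem_cons.1 hx with rfl | hx
    · exact ⟨x, l, suffix_refl _, hPx, hl⟩
    · exact absurd hPx (hl x hx)

theorem exists_prefix_subset_of_mem_concat (h : u ∈ p ++ [c]) :
    ∃ p', p' ++ [u] <+: p ++ [c] ∧ p' ⊆ p := by
  rcases mem_append.1 h with h | h
  · obtain ⟨s, t, rfl⟩ := append_of_mem h
    exact ⟨s, ⟨t ++ [c], by simp⟩, by simp⟩
  · exact ⟨p, by simp_all, Subset.refl p⟩

theorem exists_suffix_subset_of_mem_cons (h : u ∈ d :: q) :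
    ∃ q', u :: q' <:+ d :: q ∧ q' ⊆ q := by
  rcases mem_cons.1 h with rfl | h
  · exact ⟨q, suffix_refl _, Subset.refl q⟩
  · obtain ⟨s, t, rfl⟩ := append_of_mem h
    exact ⟨t, ⟨d :: s, by simp⟩, by simp⟩

end List

namespace Menger

variable {α : Type*} {E E' : Finset (α × α)} {A B X Y S T : Finset α} {l p q : List α} {u : α}
  {k : ℕ}

structure IsWalk (E : Finset (α × α)) (A B : Finset α) (l : List α) : Prop where
  head : ∃ a ∈ A, l.head? = some a
  chain : l.IsChain fun a b => (a, b) ∈ E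
  getLast : ∃ b ∈ B, l.getLast? = some b

def Separates (E : Finset (α × α)) (A B S : Finset α) : Prop :=
  ∀ l, IsWalk E A B l → ∃ x ∈ S, x ∈ l

namespace IsWalk

theorem ne_nil (h : IsWalk E A B l) : l ≠ [] := by
  rintro rfl
  simpa using h.head

theorem mono (h : IsWalk E A B l) (hE : E ⊆ E') : IsWalk E' A B l :=
  ⟨h.head, h.chain.imp fun _ _ hab => hE hab, h.getLast⟩

theorem of_insert [DecidableEq α] {x y : α} (h : IsWalk (insert (x, y) E) A B l)
    (hxy : x ∉ l ∨ y ∉ l) : IsWalk E A B l := by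
  refine ⟨h.head, h.chain.imp_of_mem_imp fun a b ha hb hab => ?_, h.getLast⟩
  refine (Finset.mem_insert.1 hab).resolve_left fun he => ?_
  obtain ⟨rfl, rfl⟩ := Prod.mk.inj he
  tauto

theorem of_prefix (h : IsWalk E A B l) (hp : p ++ [u] <+: l) (hu : u ∈ X) :
    IsWalk E A X (p ++ [u]) := by
  refine ⟨?_, h.chain.prefix hp, ⟨u, hu, by simp⟩⟩
  obtain ⟨t, rfl⟩ := hp
  simpa [List.head?_append] using h.head

theorem of_suffix (h : IsWalk E A B l) (hq : u :: q <:+ l) (hu : u ∈ X) :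
    IsWalk E X B (u :: q) := by
  refine ⟨⟨u, hu, rfl⟩, h.chain.suffix hq, ?_⟩
  obtain ⟨t, rfl⟩ := hq
  simpa [List.getLast?_append] using h.getLast

theorem append (h₁ : IsWalk E A X l) (h₂ : IsWalk E Y B q)
    (h : ∀ a ∈ l.getLast?, ∀ b ∈ q.head?, (a, b) ∈ E) : IsWalk E A B (l ++ q) := by
  refine ⟨?_, h₁.chain.append h₂.chain h, ?_⟩
  · rw [List.head?_append_of_ne_nil _ h₁.ne_nil]
    exact h₁.head
  · rw [List.getLast?_append_of_ne_nil _ h₂.ne_nil]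
    exact h₂.getLast

theorem append_cons (h₁ : IsWalk E A X (p ++ [u])) (h₂ : IsWalk E Y B (u :: q)) :
    IsWalk E A B (p ++ u :: q) := by
  refine ⟨?_, List.isChain_split.2 ⟨h₁.chain, h₂.chain⟩, ?_⟩
  · simpa [List.head?_append] using h₁.head
  · simpa [List.getLast?_append] using h₂.getLast

theorem exists_prefix (h : IsWalk E A B l) (hX : ∃ x ∈ X, x ∈ l) :
    ∃ p u, IsWalk E A X (p ++ [u]) ∧ p ++ [u] <+: l ∧ ∀ z ∈ p, z ∉ X := by
  obtain ⟨p, u, hpre, hu, hp⟩ :=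
    List.exists_prefix_to_first (P := (· ∈ X)) (l := l) (by aesop)
  exact ⟨p, u, h.of_prefix hpre hu, hpre, hp⟩

theorem exists_suffix (h : IsWalk E A B l) (hY : ∃ y ∈ Y, y ∈ l) :
    ∃ u q, IsWalk E Y B (u :: q) ∧ u :: q <:+ l ∧ ∀ z ∈ q, z ∉ Y := by
  obtain ⟨u, q, hsuf, hu, hq⟩ :=
    List.exists_suffix_from_last (P := (· ∈ Y)) (l := l) (by aesop)
  exact ⟨u, q, h.of_suffix hsuf hu, hsuf, hq⟩

end IsWalk

namespace Separates

theorem insert [DecidableEq α] {x y z : α} (hS : Separates E A B S) (hz : z = x ∨ z = y) :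
    Separates (insert (x, y) E) A B (insert z S) := by
  intro l hl
  by_cases hzl : z ∈ l
  · exact ⟨z, Finset.mem_insert_self z S, hzl⟩
  obtain ⟨w, hw, hwl⟩ := hS l (hl.of_insert (by rcases hz with rfl | rfl <;> tauto))
  exact ⟨w, Finset.mem_insert_of_mem hw, hwl⟩

theorem of_prefix (hX : Separates E A B X) (hT : Separates E' A X T)
    (hE : ∀ a b, (a, b) ∈ E → a ∉ X → (a, b) ∈ E') : Separates E A B T := by
  intro l hl
  obtain ⟨x, hx, hxl⟩ := hX l hl
  obtain ⟨p, c, hw, hpre, hp⟩ := hl.exists_prefix ⟨x, hx, hxl⟩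
  have hw' : IsWalk E' A X (p ++ [c]) :=
    ⟨hw.head, hw.chain.imp_of_mem_dropLast_imp fun a b ha hab =>
      hE a b hab (hp a (by simpa using ha)), hw.getLast⟩
  obtain ⟨z, hz, hzl⟩ := hT _ hw'
  exact ⟨z, hz, hpre.subset hzl⟩

theorem of_suffix (hY : Separates E A B Y) (hT : Separates E' Y B T)
    (hE : ∀ a b, (a, b) ∈ E → b ∉ Y → (a, b) ∈ E') : Separates E A B T := by
  intro l hl
  obtain ⟨y, hy, hyl⟩ := hY l hl
  obtain ⟨d, q, hw, hsuf, hq⟩ := hl.exists_suffix ⟨y, hy, hyl⟩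
  have hw' : IsWalk E' Y B (d :: q) :=
    ⟨hw.head, hw.chain.imp_of_mem_tail_imp fun a b _ hb hab => hE a b hab (hq b hb), hw.getLast⟩
  obtain ⟨z, hz, hzl⟩ := hT _ hw'
  exact ⟨z, hz, hsuf.subset hzl⟩

/-- Splicing the two walks at a common vertex `u` gives an `A`–`B` walk that can meet `S`
only in `u`. -/
theorem mem_of_mem_of_mem {c d : α} (hS : Separates E A B S) (hP : IsWalk E A X (p ++ [c]))
    (hp : ∀ z ∈ p, z ∉ S) (hQ : IsWalk E Y B (d :: q)) (hq : ∀ z ∈ q, z ∉ S)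
    (hup : u ∈ p ++ [c]) (huq : u ∈ d :: q) : u ∈ S := by
  obtain ⟨p', hpre, hp'⟩ := List.exists_prefix_subset_of_mem_concat hup
  obtain ⟨q', hsuf, hq'⟩ := List.exists_suffix_subset_of_mem_cons huq
  have hw := (hP.of_prefix hpre (Finset.mem_singleton_self u)).append_cons
    (hQ.of_suffix hsuf (Finset.mem_singleton_self u))
  obtain ⟨z, hzS, hz⟩ := hS _ hw
  rcases List.mem_append.1 hz with hz | hz
  · exact absurd hzS (hp z (hp' hz))
  rcases List.mem_cons.1 hz with rfl | hz
  · exact hzS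
  · exact absurd hzS (hq z (hq' hz))

end Separates

theorem exists_disjoint_prefixes {ι : Type*} {W : ι → List α} (hW : ∀ i, IsWalk E A X (W i))
    (hd : Pairwise (List.Disjoint on W)) :
    ∃ (p : ι → List α) (c : ι → α), (∀ i, IsWalk E A X (p i ++ [c i])) ∧ (∀ i, c i ∈ X) ∧
      (∀ i, ∀ z ∈ p i, z ∉ X) ∧ Pairwise (List.Disjoint on fun i => p i ++ [c i]) := by
  have hhit : ∀ i, ∃ x ∈ X, x ∈ W i := fun i => by
    obtain ⟨b, hb, hlast⟩ := (hW i).getLast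
    exact ⟨b, hb, List.mem_of_getLast? hlast⟩
  choose p c hw hpre hp using fun i => (hW i).exists_prefix (hhit i)
  refine ⟨p, c, hw, fun i => ?_, hp, fun i j hij z hi hj =>
    hd hij ((hpre i).subset hi) ((hpre j).subset hj)⟩
  obtain ⟨b, hb, hlast⟩ := (hw i).getLast
  simp_all

theorem exists_disjoint_suffixes {ι : Type*} {W : ι → List α} (hW : ∀ i, IsWalk E Y B (W i))
    (hd : Pairwise (List.Disjoint on W)) :
    ∃ (d : ι → α) (q : ι → List α), (∀ i, IsWalk E Y B (d i :: q i)) ∧ (∀ i, d i ∈ Y) ∧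
      (∀ i, ∀ z ∈ q i, z ∉ Y) ∧ Pairwise (List.Disjoint on fun i => d i :: q i) := by
  have hhit : ∀ i, ∃ y ∈ Y, y ∈ W i := fun i => by
    obtain ⟨a, ha, hhead⟩ := (hW i).head
    exact ⟨a, ha, List.mem_of_head? hhead⟩
  choose d q hw hsuf hq using fun i => (hW i).exists_suffix (hhit i)
  refine ⟨d, q, hw, fun i => ?_, hq, fun i j hij z hi hj =>
    hd hij ((hsuf i).subset hi) ((hsuf j).subset hj)⟩
  obtain ⟨a, ha, hhead⟩ := (hw i).head
  simp_all

theorem injective_of_mem_of_pairwise_disjoint {ι : Type*} {W : ι → List α} {f : ι → α}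
    (hW : Pairwise (List.Disjoint on W)) (hf : ∀ i, f i ∈ W i) : Injective f := by
  intro i j hij
  by_contra hne
  exact hW hne (hf i) (hij ▸ hf j)

theorem card_le_of_separates {W : Fin k → List α} (hW : ∀ i, IsWalk E A B (W i))
    (hd : Pairwise (List.Disjoint on W)) (hS : Separates E A B S) : k ≤ S.card := by
  choose f hfS hfW using fun i => hS (W i) (hW i)
  simpa using Finset.card_le_card_of_injOn (s := Finset.univ) f (fun i _ => hfS i)
    (injective_of_mem_of_pairwise_disjoint hd hfW).injOn

variable [DecidableEq α]

theorem exists_disjoint_walks_empty (hk : ∀ S, Separates ∅ A B S → k ≤ S.card) :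
    ∃ W : Fin k → List α, (∀ i, IsWalk ∅ A B (W i)) ∧ Pairwise (List.Disjoint on W) := by
  have hsep : Separates ∅ A B (A ∩ B) := by
    rintro (_ | ⟨a, _ | ⟨b, l⟩⟩) hl
    · simpa using hl.head
    · obtain ⟨a', ha, h⟩ := hl.head
      obtain ⟨b', hb, h'⟩ := hl.getLast
      simp_all
    · simpa using hl.chain
  let f : Fin k ↪ α := (Fin.castLEEmb (hk _ hsep)).trans
    ((A ∩ B).equivFin.symm.toEmbedding.trans (Function.Embedding.subtype _))
  have hf : ∀ i, f i ∈ A ∩ B := fun i => ((A ∩ B).equivFin.symm _).2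
  refine ⟨fun i => [f i], fun i => ?_, fun i j hij => by simpa using f.injective.ne hij.symm⟩
  obtain ⟨hA, hB⟩ := Finset.mem_inter.1 (hf i)
  exact ⟨⟨f i, hA, rfl⟩, List.isChain_singleton _, ⟨f i, hB, rfl⟩⟩

theorem exists_matching {x y : α} {c d : Fin k → α} (hc : Injective c)
    (hcS : ∀ i, c i ∈ insert x S) (hd : Injective d) (hdS : ∀ j, d j ∈ insert y S) (hyS : y ∉ S)
    (hk : (insert y S).card = k) :
    ∃ σ : Fin k → Fin k, Injective σ ∧ ∀ i, d (σ i) = if c i = x then y else c i := by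
  have he : Injective fun i => if c i = x then y else c i := by
    intro i j hij
    dsimp only at hij
    split_ifs at hij with hi hj hj
    · exact hc (hi.trans hj.symm)
    all_goals grind
  have hd_surj : ∀ z ∈ insert y S, ∃ j, d j = z := fun z hz => by
    obtain ⟨j, -, rfl⟩ := Finset.surj_on_of_inj_on_of_card_le (s := Finset.univ)
      (fun j _ => d j) (fun j _ => hdS j) (fun i j _ _ h => hd h) (by simp [hk]) z hz
    exact ⟨j, rfl⟩
  choose σ hσ using fun i => hd_surj (if c i = x then y else c i) (by grind)
  exact ⟨σ, fun i j h => he (by simp only [← hσ, h]), hσ⟩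

/-- The walk ending in `x` is continued through the edge `(x, y)` by the walk starting in `y`,
and every other walk, ending in some `z ∈ S`, by the walk starting in `z`. -/
theorem exists_disjoint_walks_of_insert {x y : α} (hS : Separates E A B S) (hxS : x ∉ S)
    (hyS : y ∉ S) (hk : (insert y S).card = k) {P Q : Fin k → List α}
    (hP : ∀ i, IsWalk E A (insert x S) (P i)) (hPd : Pairwise (List.Disjoint on P))
    (hQ : ∀ j, IsWalk E (insert y S) B (Q j)) (hQd : Pairwise (List.Disjoint on Q)) :
    ∃ W : Fin k → List α, (∀ i, IsWalk (insert (x, y) E) A B (W i)) ∧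
      Pairwise (List.Disjoint on W) := by
  obtain ⟨p, c, hP, hc, hp, hPd⟩ := exists_disjoint_prefixes hP hPd
  obtain ⟨d, q, hQ, hd, hq, hQd⟩ := exists_disjoint_suffixes hQ hQd
  have hc_inj := injective_of_mem_of_pairwise_disjoint hPd fun i => List.mem_concat_self
  have hd_inj := injective_of_mem_of_pairwise_disjoint hQd fun j => List.mem_cons_self
  obtain ⟨σ, hσ_inj, hσ⟩ := exists_matching hc_inj hc hd_inj hd hyS hk
  have cross : ∀ i j z, z ∈ p i ++ [c i] → z ∈ d (σ j) :: q (σ j) → i = j := by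
    intro i j z hzP hzQ
    have hzS := hS.mem_of_mem_of_mem (hP i) (fun z hz hzS => hp i z hz (by simp [hzS]))
      (hQ (σ j)) (fun z hz hzS => hq _ z hz (by simp [hzS])) hzP hzQ
    have hzc : z = c i := List.mem_singleton.1 <|
      (List.mem_append.1 hzP).resolve_left fun h => hp i z h (Finset.mem_insert_of_mem hzS)
    have hzd : z = d (σ j) :=
      (List.mem_cons.1 hzQ).resolve_right fun h => hq _ z h (Finset.mem_insert_of_mem hzS)
    have hcx : c i ≠ x := fun h => hxS (h ▸ hzc ▸ hzS)
    exact hσ_inj (hd_inj ((hσ i).trans ((if_neg hcx).trans (hzc.symm.trans hzd))))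
  refine ⟨fun i => (p i ++ [c i]) ++ if c i = x then d (σ i) :: q (σ i) else q (σ i),
    fun i => ?_, fun i j hij z hzi hzj => ?_⟩
  · have hPE := (hP i).mono (Finset.subset_insert (x, y) E)
    have hQE := (hQ (σ i)).mono (Finset.subset_insert (x, y) E)
    beta_reduce
    by_cases hcx : c i = x
    · rw [if_pos hcx]
      refine hPE.append hQE fun a ha b hb => ?_
      simp_all
    · have hdc : d (σ i) = c i := by simp [hσ, hcx]
      rw [if_neg hcx, List.append_assoc, List.singleton_append]
      exact hPE.append_cons (hdc ▸ hQE)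
  · have hmem : ∀ i z, z ∈ (p i ++ [c i]) ++ (if c i = x then d (σ i) :: q (σ i) else q (σ i)) →
        z ∈ p i ++ [c i] ∨ z ∈ d (σ i) :: q (σ i) := by
      intro i z hz
      split_ifs at hz <;> simp only [List.mem_append, List.mem_cons] at hz ⊢ <;> tauto
    rcases hmem i z hzi with hi | hi <;> rcases hmem j z hzj with hj | hj
    · exact hPd hij hi hj
    · exact hij (cross i j z hi hj)
    · exact hij (cross j i z hj hi).symm
    · exact hQd (hσ_inj.ne hij) hi hj

theorem exists_disjoint_walks (E : Finset (α × α)) {k : ℕ}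
    (hk : ∀ S, Separates E A B S → k ≤ S.card) :
    ∃ W : Fin k → List α, (∀ i, IsWalk E A B (W i)) ∧ Pairwise (List.Disjoint on W) := by
  induction E using Finset.induction_on generalizing A B k with
  | empty => exact exists_disjoint_walks_empty hk
  | insert e E _ ih =>
    obtain ⟨x, y⟩ := e
    by_cases hE : ∀ S, Separates E A B S → k ≤ S.card
    · obtain ⟨W, hW, hWd⟩ := ih hE
      exact ⟨W, fun i => (hW i).mono (Finset.subset_insert _ _), hWd⟩
    push Not at hE
    obtain ⟨S, hS, hSk⟩ := hE
    have hX : Separates (insert (x, y) E) A B (insert x S) := hS.insert (.inl rfl)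
    have hY : Separates (insert (x, y) E) A B (insert y S) := hS.insert (.inr rfl)
    have hXk := le_antisymm ((Finset.card_insert_le x S).trans hSk) (hk _ hX)
    have hYk := le_antisymm ((Finset.card_insert_le y S).trans hSk) (hk _ hY)
    have hxS : x ∉ S := fun hx => by rw [Finset.insert_eq_of_mem hx] at hXk; omega
    have hyS : y ∉ S := fun hy => by rw [Finset.insert_eq_of_mem hy] at hYk; omega
    have hE_left : ∀ a b, (a, b) ∈ insert (x, y) E → a ∉ insert x S → (a, b) ∈ E := by
      intro a b hab ha
      exact (Finset.mem_insert.1 hab).resolve_left fun h => ha (by simp [(Prod.mk.inj h).1])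
    have hE_right : ∀ a b, (a, b) ∈ insert (x, y) E → b ∉ insert y S → (a, b) ∈ E := by
      intro a b hab hb
      exact (Finset.mem_insert.1 hab).resolve_left fun h => hb (by simp [(Prod.mk.inj h).2])
    obtain ⟨P, hP, hPd⟩ := ih fun T hT => hk T (hX.of_prefix hT hE_left)
    obtain ⟨Q, hQ, hQd⟩ := ih fun T hT => hk T (hY.of_suffix hT hE_right)
    exact exists_disjoint_walks_of_insert hS hxS hyS hYk hP hPd hQ hQd

theorem exists_isGreatest_isLeast (E : Finset (α × α)) (A B : Finset α) :
    ∃ M : ℕ,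
      IsGreatest {n | ∃ W : Fin n → List α, (∀ i, IsWalk E A B (W i)) ∧
        Pairwise (List.Disjoint on W)} M ∧
      IsLeast {n | ∃ S, S.card = n ∧ Separates E A B S} M := by
  have hA : Separates E A B A := fun l hl => by
    obtain ⟨a, ha, hhead⟩ := hl.head
    exact ⟨a, ha, List.mem_of_head? hhead⟩
  set cuts := {n | ∃ S, S.card = n ∧ Separates E A B S}
  have hmin : sInf cuts ∈ cuts := Nat.sInf_mem ⟨A.card, A, rfl, hA⟩
  have ⟨S₀, hS₀, hS₀sep⟩ := hmin
  refine ⟨sInf cuts, ⟨exists_disjoint_walks E fun S hS => Nat.sInf_le ⟨S, rfl, hS⟩, ?_⟩,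
    hmin, fun n hn => Nat.sInf_le hn⟩
  rintro n ⟨W, hW, hWd⟩
  exact hS₀ ▸ card_le_of_separates hW hWd hS₀sep

end Menger

section Temporal

variable {V : Type*} {E : V → V → Prop} {lab : V → V → Finset ℕ} {s v : V}

def DepartsTo (E : V → V → Prop) (lab : V → V → Finset ℕ) (x : V × ℕ) (w : V) : Prop :=
  E x.1 w ∧ x.2 ∈ lab x.1 w

namespace Journey

def departures (J : Journey E lab s v) : List (V × ℕ) :=
  List.ofFn fun i => (J.vert i.castSucc, J.lbl i)

theorem departsTo (J : Journey E lab s v) (i : Fin J.len) :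
    DepartsTo E lab (J.vert i.castSucc, J.lbl i) (J.vert i.succ) :=
  ⟨J.edge i, J.mem i⟩

theorem outDisjoint_iff (J J' : Journey E lab s v) :
    OutDisjoint J J' ↔ J.departures.Disjoint J'.departures := by
  simp only [OutDisjoint, departures, List.disjoint_left, List.mem_ofFn]
  grind

def relabel {lab' : V → V → Finset ℕ} (J : Journey E lab s v)
    (h : ∀ i, J.lbl i ∈ lab' (J.vert i.castSucc) (J.vert i.succ)) : Journey E lab' s v :=
  { J with mem := h }

theorem len_pos (hsv : s ≠ v) (J : Journey E lab s v) : 0 < J.len :=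
  Nat.pos_of_ne_zero fun h => hsv <| J.first.symm.trans <|
    (congrArg J.vert (Fin.ext (by simp [h]))).trans J.last

end Journey

variable [Fintype V] (E lab)

def timeLabels : Finset ℕ := Finset.univ.biUnion fun u => Finset.univ.biUnion (lab u)

open Classical in
noncomputable def departureEdges : Finset ((V × ℕ) × (V × ℕ)) :=
  ((Finset.univ ×ˢ timeLabels lab) ×ˢ (Finset.univ ×ˢ timeLabels lab)).filter
    fun e => DepartsTo E lab e.1 e.2.1 ∧ e.1.2 < e.2.2

def initialDepartures (s : V) : Finset (V × ℕ) := {s} ×ˢ timeLabels lab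

open Classical in
noncomputable def finalDepartures (v : V) : Finset (V × ℕ) :=
  (Finset.univ ×ˢ timeLabels lab).filter fun x => DepartsTo E lab x v

variable {E lab}

theorem mem_timeLabels {u w : V} {t : ℕ} (h : t ∈ lab u w) : t ∈ timeLabels lab := by
  simp only [timeLabels, Finset.mem_biUnion, Finset.mem_univ, true_and]
  exact ⟨u, w, h⟩

theorem mem_departureEdges {x y : V × ℕ} :
    (x, y) ∈ departureEdges E lab ↔ DepartsTo E lab x y.1 ∧ x.2 < y.2 ∧ y.2 ∈ timeLabels lab := by
  simp only [departureEdges, Finset.mem_filter, Finset.mem_product, Finset.mem_univ, true_and]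
  exact ⟨fun h => ⟨h.2.1, h.2.2, h.1.2⟩, fun h => ⟨⟨mem_timeLabels h.1.2, h.2.2⟩, h.1, h.2.1⟩⟩

theorem mem_finalDepartures {x : V × ℕ} :
    x ∈ finalDepartures E lab v ↔ DepartsTo E lab x v := by
  simp only [finalDepartures, Finset.mem_filter, Finset.mem_product, Finset.mem_univ, true_and]
  exact ⟨And.right, fun h => ⟨mem_timeLabels h.2, h⟩⟩

namespace Journey

theorem isWalk_departures (hsv : s ≠ v) (J : Journey E lab s v) :
    Menger.IsWalk (departureEdges E lab) (initialDepartures lab s) (finalDepartures E lab v)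
      J.departures := by
  have hlen := J.len_pos hsv
  set last : Fin J.len := ⟨J.len - 1, by omega⟩
  refine ⟨⟨(J.vert 0, J.lbl ⟨0, hlen⟩), ?_, by simp [departures, List.head?_eq_getElem?, hlen]⟩,
    List.isChain_iff_getElem.2 fun i hi => ?_,
    ⟨(J.vert last.castSucc, J.lbl last), ?_,
      by simp [departures, List.getLast?_eq_getElem?, hlen, last]⟩⟩
  · simp only [initialDepartures, Finset.mem_product, Finset.mem_singleton]
    exact ⟨J.first, mem_timeLabels (J.mem _)⟩
  · simp only [departures, List.getElem_ofFn, List.length_ofFn] at hi ⊢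
    exact mem_departureEdges.2 ⟨J.departsTo ⟨i, by omega⟩, J.mono (Fin.mk_lt_mk.2 (by omega)),
      mem_timeLabels (J.mem _)⟩
  · have hv : J.vert last.succ = v :=
      (congrArg J.vert (Fin.ext (by simp [last]; omega))).trans J.last
    have := J.departsTo last
    rw [hv] at this
    exact mem_finalDepartures.2 this

theorem exists_departures_eq {l : List (V × ℕ)}
    (hl : Menger.IsWalk (departureEdges E lab) (initialDepartures lab s)
      (finalDepartures E lab v) l) :
    ∃ J : Journey E lab s v, J.departures = l := by
  -- The journey visits the nodes of `l` and then `v`; the label `0` is never read.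
  set l' := l ++ [(v, 0)]
  have hsteps : l'.IsChain fun x y => DepartsTo E lab x y.1 := by
    refine (hl.chain.imp fun x y h => (mem_departureEdges.1 h).1).append
      (List.isChain_singleton _) ?_
    obtain ⟨b, hb, hlast⟩ := hl.getLast
    simpa [hlast] using mem_finalDepartures.1 hb
  have hmono : (l.map Prod.snd).Pairwise (· < ·) :=
    ((List.isChain_map (R := (· < ·)) Prod.snd).2
      (hl.chain.imp fun x y h => (mem_departureEdges.1 h).2.1)).pairwise
  refine ⟨{ len := l.length
            vert := fun i => (l'[(i : ℕ)]'(by simp [l']; omega)).1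
            lbl := fun i => (l'[(i : ℕ)]'(by simp [l'])).2
            first := ?_
            last := by simp [l']
            edge := fun i => (List.isChain_iff_getElem.1 hsteps i (by simp [l'])).1
            mem := fun i => (List.isChain_iff_getElem.1 hsteps i (by simp [l'])).2
            mono := fun i j hij => ?_ }, ?_⟩
  · obtain ⟨a, ha, hhead⟩ := hl.head
    simp only [initialDepartures, Finset.mem_product, Finset.mem_singleton] at ha
    obtain ⟨h0, hla⟩ := List.getElem?_eq_some_iff.1 (List.head?_eq_getElem? ▸ hhead)
    simp [l', List.getElem_append_left h0, hla, ha.1]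
  · have := List.pairwise_iff_getElem.1 hmono i j (by simp) (by simp) hij
    simpa [l', List.getElem_append_left] using this
  · exact List.ext_getElem (by simp [departures]) fun i h₁ h₂ => by
      simp [departures, l']

end Journey

theorem exists_pairwise_outDisjoint_iff {ι : Type*} (hsv : s ≠ v) :
    (∃ J : ι → Journey E lab s v, ∀ i j, i ≠ j → OutDisjoint (J i) (J j)) ↔
      ∃ W : ι → List (V × ℕ),
        (∀ i, Menger.IsWalk (departureEdges E lab) (initialDepartures lab s)
          (finalDepartures E lab v) (W i)) ∧ Pairwise (List.Disjoint on W) := by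
  constructor
  · rintro ⟨J, hJ⟩
    exact ⟨fun i => (J i).departures, fun i => (J i).isWalk_departures hsv,
      fun i j hij => ((J i).outDisjoint_iff _).1 (hJ i j hij)⟩
  · rintro ⟨W, hW, hWd⟩
    choose J hJ using fun i => Journey.exists_departures_eq (hW i)
    exact ⟨J, fun i j hij => ((J i).outDisjoint_iff _).2 (by rw [hJ, hJ]; exact hWd hij)⟩

theorem separates_iff_isEmpty [DecidableEq V] (hsv : s ≠ v) (D : Finset (V × ℕ)) :
    Menger.Separates (departureEdges E lab) (initialDepartures lab s) (finalDepartures E lab v) D ↔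
      IsEmpty (Journey E (removeDepartures lab D) s v) := by
  constructor
  · refine fun hD => ⟨fun J => ?_⟩
    have hJ := (J.relabel fun i => (Finset.mem_filter.1 (J.mem i)).1).isWalk_departures hsv
    obtain ⟨x, hxD, hx⟩ := hD _ hJ
    obtain ⟨i, rfl⟩ := List.mem_ofFn.1 hx
    exact (Finset.mem_filter.1 (J.mem i)).2 hxD
  · intro hD l hl
    by_contra! hlD
    obtain ⟨J, rfl⟩ := Journey.exists_departures_eq hl
    exact hD.false (J.relabel fun i =>
      Finset.mem_filter.2 ⟨J.mem i, fun h => hlD _ h (List.mem_ofFn.2 ⟨i, rfl⟩)⟩)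

end Temporal

/-- Menger's temporal analogue (out-disjoint version): the maximum number of pairwise
out-disjoint journeys from `s` to `v` equals the minimum number of node departure
times whose removal leaves no journey from `s` to `v`. -/
theorem menger_temporal_out_disjoint {V : Type*} [Fintype V] [DecidableEq V]
    (E : V → V → Prop) (lab : V → V → Finset ℕ) (s v : V) (hsv : s ≠ v) :
    ∃ M : ℕ,
      IsGreatest {n | ∃ J : Fin n → Journey E lab s v,
        ∀ i j, i ≠ j → OutDisjoint (J i) (J j)} M ∧
      IsLeast {n | ∃ D : Finset (V × ℕ), D.card = n ∧
        IsEmpty (Journey E (removeDepartures lab D) s v)} M := by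
  obtain ⟨M, hmax, hmin⟩ := Menger.exists_isGreatest_isLeast (departureEdges E lab)
    (initialDepartures lab s) (finalDepartures E lab v)
  refine ⟨M, ?_, ?_⟩
  · simpa only [exists_pairwise_outDisjoint_iff hsv] using hmax
  · simpa only [separates_iff_isEmpty hsv] using hmin
end

section
/- If G is a directed ring (directed cycle) on n ≥ 3 vertices, then the temporality of G with respect to the all-paths property equals 2; that is, there is a labeling that preserves every simple path of G and assigns at most 2 labels to each edge, and no labeling with at most 1 label per edge preserves every simple path of G. -/
/-!
Every simple path of the directed ring is an arc `j, j + 1, …, j + k` with `k < n`. Giving the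
edge leaving `i` the labels `i` and `i + n` (the times at which a walk going twice around the ring
crosses it) preserves every such arc, along the labels `j, j + 1, …, j + k < 2n`. Conversely, if
each edge `j → j + 1` carries a single label `m j`, the path `j, j + 1, j + 2`, simple since
`n ≥ 3`, forces `m j < m (j + 1)`, which cannot hold all the way around the cycle.
-/

/-- `w` is a simple path of the digraph with edge relation `E`: a sequence of
`k + 1` distinct vertices joined by consecutive edges. -/
def IsPath {V : Type*} (E : V → V → Prop) {k : ℕ} (w : Fin (k + 1) → V) : Prop :=
  Function.Injective w ∧ ∀ i : Fin k, E (w i.castSucc) (w i.succ)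

/-- The labeling `lab` preserves the path `w`: there is a strictly increasing
choice of labels along the consecutive edges of `w`. -/
def Preserves {V : Type*} (lab : V → V → Finset ℕ) {k : ℕ} (w : Fin (k + 1) → V) : Prop :=
  ∃ l : Fin k → ℕ, StrictMono l ∧ ∀ i : Fin k, l i ∈ lab (w i.castSucc) (w i.succ)

/-- The labeling `lab` preserves every simple path of the digraph `E`
(the "all paths" property). -/
def PreservesAll {V : Type*} (E : V → V → Prop) (lab : V → V → Finset ℕ) : Prop :=
  ∀ (k : ℕ) (w : Fin (k + 1) → V), IsPath E w → Preserves lab w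

/-- The directed ring on `n` vertices `0, 1, …, n-1`: there is an edge from `i`
to `j` iff `j = i + 1 (mod n)`. -/
def ringAdj (n : ℕ) : Fin n → Fin n → Prop :=
  fun i j => (j : ℕ) = ((i : ℕ) + 1) % n

section

open Fin.NatCast

theorem ringAdj_iff_eq_add_one {n : ℕ} [NeZero n] {i j : Fin n} :
    ringAdj n i j ↔ j = i + 1 := by
  simp [ringAdj, Fin.ext_iff, Fin.val_add]

theorem Fin.not_forall_lt_add_one {n : ℕ} [NeZero n] {α : Type*} [Preorder α]
    (f : Fin n → α) : ¬ ∀ j, f j < f (j + 1) := by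
  intro hf
  have hmono : StrictMono fun t : ℕ => f (t : Fin n) :=
    strictMono_nat_of_lt_succ fun t => by simpa using hf (t : Fin n)
  simpa using hmono (Nat.pos_of_neZero n)

def ringArc (n : ℕ) [NeZero n] (j : Fin n) (k : ℕ) : Fin (k + 1) → Fin n :=
  fun i => j + ((i : ℕ) : Fin n)

theorem isPath_ringAdj_iff {n k : ℕ} [NeZero n] {w : Fin (k + 1) → Fin n} :
    IsPath (ringAdj n) w ↔ k < n ∧ w = ringArc n (w 0) k := by
  constructor
  · rintro ⟨hinj, hadj⟩
    refine ⟨by simpa using Fintype.card_le_of_injective w hinj, funext fun i => ?_⟩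
    induction i using Fin.induction with
    | zero => simp [ringArc]
    | succ i ih =>
      rw [ringAdj_iff_eq_add_one.mp (hadj i), ih]
      simp [ringArc, add_assoc]
  · rintro ⟨hk, hw⟩
    rw [hw]
    refine ⟨fun a b hab => ?_, fun i => ?_⟩
    · have := congrArg Fin.val (add_left_cancel hab)
      simp only [Fin.val_natCast] at this
      rw [Nat.mod_eq_of_lt (by omega), Nat.mod_eq_of_lt (by omega)] at this
      exact Fin.ext this
    · simp [ringAdj_iff_eq_add_one, ringArc, add_assoc]

def ringLabeling (n : ℕ) : Fin n → Fin n → Finset ℕ :=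
  fun i _ => {(i : ℕ), i + n}

theorem card_ringLabeling_le (n : ℕ) (i j : Fin n) : (ringLabeling n i j).card ≤ 2 :=
  Finset.card_le_two

theorem preserves_ringLabeling_ringArc {n k : ℕ} [NeZero n] (j : Fin n) (hk : k < n) :
    Preserves (ringLabeling n) (ringArc n j k) := by
  refine ⟨fun i => j + i, fun a b hab => by simpa using hab, fun i => ?_⟩
  have hlt : (j : ℕ) + i < 2 * n := by omega
  simp only [ringLabeling, ringArc, Fin.val_add, Fin.val_natCast, Fin.val_castSucc,
    Nat.add_mod_mod, Finset.mem_insert, Finset.mem_singleton]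
  rcases lt_or_ge ((j : ℕ) + i) n with h | h
  · exact .inl (Nat.mod_eq_of_lt h).symm
  · rw [Nat.mod_eq_sub_mod h, Nat.mod_eq_of_lt (by omega)]
    omega

theorem preservesAll_ringLabeling (n : ℕ) [NeZero n] :
    PreservesAll (ringAdj n) (ringLabeling n) := by
  intro k w hw
  obtain ⟨hk, hw⟩ := isPath_ringAdj_iff.mp hw
  rw [hw]
  exact preserves_ringLabeling_ringArc _ hk

theorem Preserves.exists_lt {V : Type*} {lab : V → V → Finset ℕ} {w : Fin 3 → V}
    (h : Preserves lab w) : ∃ x ∈ lab (w 0) (w 1), ∃ y ∈ lab (w 1) (w 2), x < y :=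
  let ⟨l, hmono, hl⟩ := h
  ⟨l 0, hl 0, l 1, hl 1, hmono Fin.zero_lt_one⟩

theorem not_preservesAll_ringAdj_of_card_le_one {n : ℕ} (hn : 3 ≤ n)
    {lab : Fin n → Fin n → Finset ℕ} (hcard : ∀ i j, ringAdj n i j → (lab i j).card ≤ 1) :
    ¬ PreservesAll (ringAdj n) lab := by
  have : NeZero n := ⟨by omega⟩
  intro hP
  have hlt (j : Fin n) : ∃ x ∈ lab j (j + 1), ∃ y ∈ lab (j + 1) (j + 1 + 1), x < y := by
    have hpath : IsPath (ringAdj n) (ringArc n j 2) :=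
      isPath_ringAdj_iff.mpr ⟨by omega, by simp [ringArc]⟩
    simpa [ringArc, add_assoc, one_add_one_eq_two] using (hP 2 _ hpath).exists_lt
  choose x hx y hy hxy using hlt
  refine Fin.not_forall_lt_add_one x fun j => ?_
  have hyx : y j = x (j + 1) := Finset.card_le_one.mp
    (hcard _ _ (ringAdj_iff_eq_add_one.mpr rfl)) _ (hy j) _ (hx (j + 1))
  exact hyx ▸ hxy j

end

/-- The temporality of the directed ring on `n ≥ 3` vertices w.r.t. the all-paths
property equals 2: some labeling with at most 2 labels per edge preserves every
simple path, and no labeling with at most 1 label per edge does. -/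
theorem temporality_ring_all_paths_eq_two (n : ℕ) (hn : 3 ≤ n) :
    (∃ lab : Fin n → Fin n → Finset ℕ,
      PreservesAll (ringAdj n) lab ∧
      ∀ i j, ringAdj n i j → (lab i j).card ≤ 2) ∧
    ∀ lab : Fin n → Fin n → Finset ℕ,
      (∀ i j, ringAdj n i j → (lab i j).card ≤ 1) → ¬ PreservesAll (ringAdj n) lab := by
  have : NeZero n := ⟨by omega⟩
  exact ⟨⟨ringLabeling n, preservesAll_ringLabeling n, fun i j _ => card_ringLabeling_le n i j⟩,
    fun _ => not_preservesAll_ringAdj_of_card_le_one hn⟩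
end

section
/- For every strongly connected digraph G, the temporality of G with respect to the reach property is at most 2; that is, there is a labeling assigning at most 2 labels to each edge such that for every ordered pair of vertices (u,v) there is a journey from u to v. -/
private def steps' {V : Type*} (R : V → V → Prop) : ℕ → V → V → Prop
  | 0, u, v => u = v
  | n+1, u, v => ∃ w, R u w ∧ steps' R n w v

private lemma steps'_snoc {V : Type*} {R : V → V → Prop} :
    ∀ {n : ℕ} {u v w : V}, steps' R n u v → R v w → steps' R (n+1) u w
  | 0, u, v, w, h, hr => ⟨w, by rw [show u = v from h]; exact hr, rfl⟩
  | n+1, u, v, w, ⟨x, hx, hs⟩, hr => ⟨x, hx, steps'_snoc hs hr⟩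

private lemma exists_steps' {V : Type*} {R : V → V → Prop} {u v : V}
    (h : Relation.ReflTransGen R u v) : ∃ n, steps' R n u v := by
  induction h with
  | refl => exact ⟨0, rfl⟩
  | tail _ hr ih => obtain ⟨n, hn⟩ := ih; exact ⟨n+1, steps'_snoc hn hr⟩

private lemma exists_dist_parent {V : Type*} (R : V → V → Prop) (r : V)
    (h : ∀ u, Relation.ReflTransGen R u r) :
    ∃ (d : V → ℕ) (p : V → V),
      (∀ u, d u = 0 ↔ u = r) ∧
      (∀ u, u ≠ r → R u (p u) ∧ d u = d (p u) + 1) := by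
  classical
  have hex : ∀ u, ∃ n, steps' R n u r := fun u => exists_steps' (h u)
  set d : V → ℕ := fun u => Nat.find (hex u) with hd
  have hspec : ∀ u, steps' R (d u) u r := fun u => Nat.find_spec (hex u)
  have hmin : ∀ u n, steps' R n u r → d u ≤ n := fun u n hn => Nat.find_le hn
  have hzero : ∀ u, d u = 0 ↔ u = r := by
    intro u
    constructor
    · intro h0; have := hspec u; rw [h0] at this; exact this
    · intro h0; exact Nat.le_zero.mp (hmin u 0 h0)
  have hpar : ∀ u, u ≠ r → ∃ w, R u w ∧ d u = d w + 1 := by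
    intro u hu
    have hd0 : d u ≠ 0 := fun h0 => hu ((hzero u).mp h0)
    obtain ⟨k, hk⟩ := Nat.exists_eq_succ_of_ne_zero hd0
    have hs := hspec u
    rw [hk] at hs
    obtain ⟨w, hw, hsw⟩ := hs
    refine ⟨w, hw, ?_⟩
    have h1 : d w ≤ k := hmin w k hsw
    have h2 : d u ≤ d w + 1 := hmin u (d w + 1) ⟨w, hw, hspec w⟩
    omega
  have hpar' : ∀ u, ∃ w, u ≠ r → R u w ∧ d u = d w + 1 := by
    intro u
    by_cases hu : u = r
    · exact ⟨r, fun hne => absurd hu hne⟩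
    · obtain ⟨w, hw⟩ := hpar u hu; exact ⟨w, fun _ => hw⟩
  choose p hp using hpar'
  exact ⟨d, p, hzero, hp⟩

/-- For every strongly connected digraph `G`, the temporality of `G` w.r.t. the
reach property is at most 2: there is a labeling assigning at most 2 labels to
each edge such that for every ordered pair of vertices `(u, v)` there is a
journey from `u` to `v`. -/
theorem temporalityReach_le_two_of_strongly_connected {V : Type*} [Fintype V]
    (E : V → V → Prop) (hsc : ∀ u v : V, Relation.ReflTransGen E u v) :
    ∃ lab : V → V → Finset ℕ,
      (∀ u v, E u v → (lab u v).card ≤ 2) ∧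
      ∀ u v : V, Nonempty (Journey E lab u v) := by
  classical
  cases isEmpty_or_nonempty V with
  | inl hV =>
    exact ⟨fun _ _ => ∅, fun u => (hV.false u).elim, fun u => (hV.false u).elim⟩
  | inr hV =>
    obtain ⟨r⟩ := hV
    obtain ⟨d, p, hd0, hp⟩ := exists_dist_parent E r (fun u => hsc u r)
    have hflip : ∀ u, Relation.ReflTransGen (flip E) u r := by
      intro u
      have h : Relation.ReflTransGen E r u := hsc r u
      induction h with
      | refl => exact .refl
      | tail _ he ih => exact Relation.ReflTransGen.head he ih
    obtain ⟨e, q, he0, hq⟩ := exists_dist_parent (flip E) r hflip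
    -- iterate lemmas
    have hpiter : ∀ (u : V) (i : ℕ), i ≤ d u → d (p^[i] u) = d u - i := by
      intro u i
      induction i with
      | zero => simp
      | succ k ih =>
        intro hk
        have hx := ih (by omega)
        have hne : p^[k] u ≠ r := by
          intro hr
          have := (hd0 (p^[k] u)).mpr hr
          omega
        have h2 := (hp _ hne).2
        rw [Function.iterate_succ_apply']
        omega
    have hqiter : ∀ (v : V) (i : ℕ), i ≤ e v → e (q^[i] v) = e v - i := by
      intro v i
      induction i with
      | zero => simp
      | succ k ih =>
        intro hk
        have hx := ih (by omega)
        have hne : q^[k] v ≠ r := by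
          intro hr
          have := (he0 (q^[k] v)).mpr hr
          omega
        have h2 := (hq _ hne).2
        rw [Function.iterate_succ_apply']
        omega
    set B := Finset.univ.sup (fun u : V => max (d u) (e u)) with hB
    have hsup : ∀ u : V, max (d u) (e u) ≤ B :=
      fun u => Finset.le_sup (f := fun u : V => max (d u) (e u)) (Finset.mem_univ u)
    have hdB : ∀ u, d u ≤ B := fun u => le_trans (le_max_left _ _) (hsup u)
    have heB : ∀ u, e u ≤ B := fun u => le_trans (le_max_right _ _) (hsup u)
    refine ⟨fun x y =>
      (if x ≠ r ∧ p x = y then ({B - d x} : Finset ℕ) else ∅) ∪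
      (if y ≠ r ∧ q y = x then ({B + e y} : Finset ℕ) else ∅), ?_, ?_⟩
    · intro u v _
      refine le_trans (Finset.card_union_le _ _) ?_
      have h1 : (if u ≠ r ∧ p u = v then ({B - d u} : Finset ℕ) else ∅).card ≤ 1 := by
        split_ifs <;> simp
      have h2 : (if v ≠ r ∧ q v = u then ({B + e v} : Finset ℕ) else ∅).card ≤ 1 := by
        split_ifs <;> simp
      omega
    · intro u v
      refine ⟨⟨d u + e v,
        fun i => if (i : ℕ) ≤ d u then p^[(i : ℕ)] u else q^[d u + e v - (i : ℕ)] v,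
        fun i => if (i : ℕ) < d u then B - d u + (i : ℕ) else B + (i : ℕ) - d u + 1,
        ?_, ?_, ?_, ?_, ?_⟩⟩
      · simp
      · simp only [Fin.val_last]
        by_cases hb : e v = 0
        · rw [if_pos (by omega)]
          have hv : v = r := (he0 v).mp hb
          have h1 := hpiter u (d u) le_rfl
          have h2 : p^[d u + e v] u = r := by
            rw [hb, Nat.add_zero]
            exact (hd0 _).mp (by omega)
          rw [h2, hv]
        · rw [if_neg (by omega)]
          simp
      · intro i
        have hin : (i : ℕ) < d u + e v := i.isLt
        simp only [Fin.coe_castSucc, Fin.val_succ]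
        by_cases hi : (i : ℕ) < d u
        · rw [if_pos (by omega), if_pos (by omega)]
          have hne : p^[(i : ℕ)] u ≠ r := by
            intro hr
            have h1 := hpiter u (i : ℕ) (by omega)
            have h2 := (hd0 _).mpr hr
            omega
          rw [Function.iterate_succ_apply']
          exact (hp _ hne).1
        · have hv1 : (if (i : ℕ) ≤ d u then p^[(i : ℕ)] u else q^[d u + e v - (i : ℕ)] v)
              = q^[d u + e v - (i : ℕ)] v := by
            by_cases hieq : (i : ℕ) = d u
            · rw [if_pos (by omega)]
              have h1 := hpiter u (d u) le_rfl
              have h2 := hqiter v (e v) le_rfl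
              have hpr : p^[d u] u = r := (hd0 _).mp (by omega)
              have hqr : q^[e v] v = r := (he0 _).mp (by omega)
              rw [hieq, hpr, show d u + e v - d u = e v by omega, hqr]
            · rw [if_neg (by omega)]
          rw [hv1, if_neg (by omega)]
          have hk : d u + e v - (i : ℕ) = (d u + e v - ((i : ℕ) + 1)) + 1 := by omega
          rw [hk, Function.iterate_succ_apply']
          have hne : q^[d u + e v - ((i : ℕ) + 1)] v ≠ r := by
            intro hr
            have h1 := hqiter v (d u + e v - ((i : ℕ) + 1)) (by omega)
            have h2 := (he0 _).mpr hr
            omega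
          exact (hq _ hne).1
      · intro i
        have hin : (i : ℕ) < d u + e v := i.isLt
        simp only [Fin.coe_castSucc, Fin.val_succ]
        by_cases hi : (i : ℕ) < d u
        · rw [if_pos hi, if_pos (show (i : ℕ) ≤ d u by omega),
            if_pos (show (i : ℕ) + 1 ≤ d u by omega), Function.iterate_succ_apply']
          have hne : p^[(i : ℕ)] u ≠ r := by
            intro hr
            have h1 := hpiter u (i : ℕ) (by omega)
            have h2 := (hd0 _).mpr hr
            omega
          apply Finset.mem_union_left
          rw [if_pos ⟨hne, rfl⟩, Finset.mem_singleton]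
          have h1 := hpiter u (i : ℕ) (by omega)
          have h2 := hdB u
          omega
        · rw [if_neg hi]
          have hv1 : (if (i : ℕ) ≤ d u then p^[(i : ℕ)] u else q^[d u + e v - (i : ℕ)] v)
              = q^[d u + e v - (i : ℕ)] v := by
            by_cases hieq : (i : ℕ) = d u
            · rw [if_pos (show (i : ℕ) ≤ d u by omega)]
              have h1 := hpiter u (d u) le_rfl
              have h2 := hqiter v (e v) le_rfl
              have hpr : p^[d u] u = r := (hd0 _).mp (by omega)
              have hqr : q^[e v] v = r := (he0 _).mp (by omega)
              rw [hieq, hpr, show d u + e v - d u = e v by omega, hqr]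
            · rw [if_neg (show ¬ ((i : ℕ) ≤ d u) by omega)]
          rw [hv1, if_neg (show ¬ ((i : ℕ) + 1 ≤ d u) by omega)]
          have hk : d u + e v - (i : ℕ) = (d u + e v - ((i : ℕ) + 1)) + 1 := by omega
          have hne : q^[d u + e v - ((i : ℕ) + 1)] v ≠ r := by
            intro hr
            have h1 := hqiter v (d u + e v - ((i : ℕ) + 1)) (by omega)
            have h2 := (he0 _).mpr hr
            omega
          apply Finset.mem_union_right
          rw [hk, Function.iterate_succ_apply', if_pos ⟨hne, rfl⟩, Finset.mem_singleton]
          have h1 := hqiter v (d u + e v - ((i : ℕ) + 1)) (by omega)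
          omega
      · intro i j hij
        have hij' : (i : ℕ) < (j : ℕ) := hij
        have h2 := hdB u
        simp only
        split_ifs <;> omega
end

section
/- For every digraph G, the temporality of G with respect to the reach property is at most 2; that is, there is a labeling assigning at most 2 labels to each edge such that, for every ordered pair of vertices (u,v) with v reachable from u in G, there is a journey from u to v. -/
set_option linter.unusedSectionVars false
set_option maxHeartbeats 1000000

open Classical

namespace TempReach

variable {V : Type*} [Fintype V] (E : V → V → Prop)

/-- A walk of length `k` from `u` to `v`. -/
def Wk (u v : V) (k : ℕ) : Prop :=
  ∃ f : ℕ → V, f 0 = u ∧ f k = v ∧ ∀ i < k, E (f i) (f (i + 1))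

variable {E}

lemma wk_refl (u : V) : Wk E u u 0 :=
  ⟨fun _ => u, rfl, rfl, fun i hi => absurd hi (by omega)⟩

lemma wk_single {u v : V} (h : E u v) : Wk E u v 1 := by
  refine ⟨fun i => if i = 0 then u else v, by simp, by simp, ?_⟩
  intro i hi
  have : i = 0 := by omega
  simp [this, h]

lemma wk_trans {u v w : V} {k1 k2 : ℕ} (h1 : Wk E u v k1) (h2 : Wk E v w k2) :
    Wk E u w (k1 + k2) := by
  obtain ⟨f, hf0, hfk, hf⟩ := h1
  obtain ⟨g, hg0, hgk, hg⟩ := h2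
  refine ⟨fun i => if i < k1 then f i else g (i - k1), ?_, ?_, ?_⟩
  · by_cases h : 0 < k1
    · simpa [h] using hf0
    · have hk1 : k1 = 0 := by omega
      simp only [hk1]
      simp only [hk1] at hfk
      simpa using hg0.trans (hfk.symm.trans hf0)
  · have : ¬ (k1 + k2 < k1) := by omega
    simp only [this, if_false]
    have : k1 + k2 - k1 = k2 := by omega
    rw [this, hgk]
  · intro i hi
    by_cases h1' : i + 1 < k1
    · have : i < k1 := by omega
      simp only [h1', this, if_true]
      exact hf i (by omega)
    · by_cases h2' : i < k1
      · have hik : i + 1 = k1 := by omega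
        simp only [h1', h2', if_true, if_false]
        have : i + 1 - k1 = 0 := by omega
        rw [this, hg0, ← hfk, ← hik]
        exact hf i (by omega)
      · simp only [h1', h2', if_false]
        have e1 : i + 1 - k1 = (i - k1) + 1 := by omega
        rw [e1]
        exact hg (i - k1) (by omega)

lemma wk_to_rtg {u v : V} {k : ℕ} (h : Wk E u v k) : Relation.ReflTransGen E u v := by
  obtain ⟨f, hf0, hfk, hf⟩ := h
  subst hf0 hfk
  induction k with
  | zero => exact Relation.ReflTransGen.refl
  | succ k ih =>
      exact Relation.ReflTransGen.tail (ih (fun i hi => hf i (by omega))) (hf k (by omega))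

lemma rtg_to_wk {u v : V} (h : Relation.ReflTransGen E u v) : ∃ k, Wk E u v k := by
  induction h with
  | refl => exact ⟨0, wk_refl u⟩
  | tail _ e ih =>
      obtain ⟨k, hk⟩ := ih
      exact ⟨k + 1, wk_trans hk (wk_single e)⟩

variable (E)

/-- Distance from `u` to `v`. -/
noncomputable def dd (u v : V) : ℕ :=
  if h : ∃ k, Wk E u v k then Nat.find h else 0

variable {E}

lemma dd_spec {u v : V} (h : Relation.ReflTransGen E u v) : Wk E u v (dd E u v) := by
  have h' := rtg_to_wk h
  rw [dd, dif_pos h']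
  exact Nat.find_spec h'

lemma dd_min {u v : V} {k : ℕ} (h : Wk E u v k) : dd E u v ≤ k := by
  rw [dd, dif_pos ⟨k, h⟩]
  exact Nat.find_le h

lemma dd_tri {u v w : V} (h1 : Relation.ReflTransGen E u v)
    (h2 : Relation.ReflTransGen E v w) : dd E u w ≤ dd E u v + dd E v w :=
  dd_min (wk_trans (dd_spec h1) (dd_spec h2))

lemma eq_of_dd_eq_zero {u v : V} (h : Relation.ReflTransGen E u v)
    (h0 : dd E u v = 0) : u = v := by
  obtain ⟨f, hf0, hfk, -⟩ := dd_spec h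
  rw [h0] at hfk
  rw [← hf0, ← hfk]

/-- geodesics: a minimal walk, along which the distances from `u` and to `v`
are exactly the index / remaining length. -/
lemma exists_geodesic {u v : V} (h : Relation.ReflTransGen E u v) :
    ∃ f : ℕ → V, f 0 = u ∧ f (dd E u v) = v ∧
      (∀ i < dd E u v, E (f i) (f (i + 1))) ∧
      (∀ i ≤ dd E u v, (dd E u (f i) = i ∧ dd E (f i) v = dd E u v - i) ∧
        Relation.ReflTransGen E u (f i) ∧ Relation.ReflTransGen E (f i) v) := by
  obtain ⟨f, hf0, hfk, hf⟩ := dd_spec h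
  refine ⟨f, hf0, hfk, hf, ?_⟩
  intro i hi
  have hpre : Wk E u (f i) i := ⟨f, hf0, rfl, fun j hj => hf j (by omega)⟩
  have hsuf : Wk E (f i) v (dd E u v - i) := by
    refine ⟨fun m => f (m + i), by simp, ?_, ?_⟩
    · show f (dd E u v - i + i) = v
      have : dd E u v - i + i = dd E u v := by omega
      rw [this, hfk]
    · intro j hj
      show E (f (j + i)) (f (j + 1 + i))
      have e1 : j + 1 + i = (j + i) + 1 := by omega
      rw [e1]
      exact hf (j + i) (by omega)
  have h1 : dd E u (f i) ≤ i := dd_min hpre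
  have h2 : dd E (f i) v ≤ dd E u v - i := dd_min hsuf
  have h3 : dd E u v ≤ dd E u (f i) + dd E (f i) v :=
    dd_tri (wk_to_rtg hpre) (wk_to_rtg hsuf)
  exact ⟨by omega, wk_to_rtg hpre, wk_to_rtg hsuf⟩

lemma dd_lt_card {u v : V} (h : Relation.ReflTransGen E u v) :
    dd E u v < Fintype.card V := by
  by_contra hcon
  push_neg at hcon
  set k := dd E u v with hkdef
  obtain ⟨f, hf0, hfk, hf⟩ := dd_spec h
  have hcard : Fintype.card V < Fintype.card (Fin (k + 1)) := by
    simp only [Fintype.card_fin]; omega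
  obtain ⟨i', j', hne, heq⟩ :=
    Fintype.exists_ne_map_eq_of_card_lt (fun m : Fin (k + 1) => f m) hcard
  -- wlog i < j
  obtain ⟨i, j, hij, hfij⟩ : ∃ i j : ℕ, i < j ∧ j ≤ k ∧ f i = f j := by
    rcases lt_or_gt_of_ne hne with hlt | hgt
    · exact ⟨i', j', hlt, by omega, heq⟩
    · exact ⟨j', i', hgt, by omega, heq.symm⟩
  obtain ⟨hjk, hfij⟩ := hfij
  have hshort : Wk E u v (k - (j - i)) := by
    refine ⟨fun m => if m < i then f m else f (m + (j - i)), ?_, ?_, ?_⟩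
    · by_cases h0 : 0 < i
      · simpa [h0] using hf0
      · have hi0 : i = 0 := by omega
        subst hi0
        simp only [lt_irrefl, if_false, Nat.zero_add]
        rw [show j - 0 = j from by omega, ← hfij, hf0]
    · have h1 : ¬ (k - (j - i) < i) := by omega
      simp only [h1, if_false]
      have : k - (j - i) + (j - i) = k := by omega
      rw [this, hfk]
    · intro m hm
      by_cases h1 : m + 1 < i
      · have h2 : m < i := by omega
        simp only [h1, h2, if_true]
        exact hf m (by omega)
      · by_cases h2 : m < i
        · have hmi : m + 1 = i := by omega
          simp only [h1, h2, if_true, if_false]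
          have : m + 1 + (j - i) = j := by omega
          rw [this, ← hfij, ← hmi]
          exact hf m (by omega)
        · simp only [h1, h2, if_false]
          have : m + 1 + (j - i) = (m + (j - i)) + 1 := by omega
          rw [this]
          exact hf (m + (j - i)) (by omega)
  have := dd_min hshort
  omega


variable (E)

/-- Same strongly connected component. -/
def SameC (u v : V) : Prop :=
  Relation.ReflTransGen E u v ∧ Relation.ReflTransGen E v u

def csetoid : Setoid V :=
  ⟨SameC E, ⟨fun _ => ⟨.refl, .refl⟩, fun h => ⟨h.2, h.1⟩,
    fun h1 h2 => ⟨h1.1.trans h2.1, h2.2.trans h1.2⟩⟩⟩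

/-- A canonical representative of each strongly connected component. -/
noncomputable def root (u : V) : V :=
  (Quotient.mk (csetoid E) u).out

/-- The number of vertices that reach `u`: a "topological index". -/
noncomputable def t (u : V) : ℕ :=
  (Finset.univ.filter (fun x => Relation.ReflTransGen E x u)).card

variable {E}

lemma root_sameC (u : V) : SameC E (root E u) u :=
  Quotient.mk_out (s := csetoid E) u

lemma root_eq {u v : V} (h : SameC E u v) : root E u = root E v :=
  congrArg Quotient.out (Quotient.sound (s := csetoid E) h)

lemma t_mono {u v : V} (h : Relation.ReflTransGen E u v) : t E u ≤ t E v := by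
  apply Finset.card_le_card
  intro x hx
  simp only [Finset.mem_filter, Finset.mem_univ, true_and] at hx ⊢
  exact hx.trans h

lemma rtg_of_t_eq {u v : V} (h : Relation.ReflTransGen E u v) (ht : t E u = t E v) :
    Relation.ReflTransGen E v u := by
  have hsub : (Finset.univ.filter (fun x => Relation.ReflTransGen E x u)) ⊆
      (Finset.univ.filter (fun x => Relation.ReflTransGen E x v)) := by
    intro x hx
    simp only [Finset.mem_filter, Finset.mem_univ, true_and] at hx ⊢
    exact hx.trans h
  have heq := Finset.eq_of_subset_of_card_le hsub (le_of_eq ht.symm)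
  have : v ∈ (Finset.univ.filter (fun x => Relation.ReflTransGen E x u)) := by
    rw [heq]
    simp only [Finset.mem_filter, Finset.mem_univ, true_and]
    exact .refl
  simpa using this

lemma t_eq_of_sameC {u v : V} (h : SameC E u v) : t E u = t E v :=
  le_antisymm (t_mono h.1) (t_mono h.2)

variable (E)

/-- The labeling: within a strongly connected component `C` in position `t` of
the topological order, with representative `r`, an edge `(u,v)` receives the
labels `t*M + (n - d(v,r))` and `t*M + n + 1 + d(r,u)`, where `M = 2n+2`;
an edge leaving the component receives the single label `t*M + 2n + 1`. -/
noncomputable def lab (u v : V) : Finset ℕ :=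
  if SameC E u v then
    {t E u * (2 * Fintype.card V + 2) + (Fintype.card V - dd E v (root E u)),
     t E u * (2 * Fintype.card V + 2) + Fintype.card V + 1 + dd E (root E u) u}
  else
    {t E u * (2 * Fintype.card V + 2) + 2 * Fintype.card V + 1}

/-- Existence of a temporal journey with all labels in `[lo, hi]`. -/
def TJ (u v : V) (lo hi : ℕ) : Prop :=
  ∃ k, ∃ f : ℕ → V, ∃ l : ℕ → ℕ, f 0 = u ∧ f k = v ∧
    (∀ i < k, E (f i) (f (i + 1)) ∧ l i ∈ lab E (f i) (f (i + 1)) ∧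
      lo ≤ l i ∧ l i ≤ hi) ∧
    (∀ i j, i < j → j < k → l i < l j)

variable {E}

lemma TJ.refl (u : V) (lo hi : ℕ) : TJ E u u lo hi :=
  ⟨0, fun _ => u, fun _ => 0, rfl, rfl, fun i hi => absurd hi (by omega),
    fun _ _ _ h => absurd h (by omega)⟩

lemma TJ.single {u v : V} {x : ℕ} (he : E u v) (hx : x ∈ lab E u v) :
    TJ E u v x x := by
  refine ⟨1, fun i => if i = 0 then u else v, fun _ => x, by simp, by simp, ?_,
    fun _ _ _ h => absurd h (by omega)⟩
  intro i hi
  have : i = 0 := by omega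
  subst this
  simp only [if_true, one_ne_zero, if_false, reduceIte]
  exact ⟨he, hx, le_refl x, le_refl x⟩

lemma TJ.concat {u v w : V} {lo hi lo' hi' : ℕ} (h1 : TJ E u v lo hi)
    (h2 : TJ E v w lo' hi') (hlo : lo ≤ lo') (hcross : hi < lo') (hhi : hi ≤ hi') :
    TJ E u w lo hi' := by
  obtain ⟨k1, f, l, hf0, hfk, hstep, hmono⟩ := h1
  obtain ⟨k2, g, m, hg0, hgk, hgstep, hgmono⟩ := h2
  refine ⟨k1 + k2, fun i => if i < k1 then f i else g (i - k1),
    fun i => if i < k1 then l i else m (i - k1), ?_, ?_, ?_, ?_⟩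
  · by_cases h : 0 < k1
    · simpa [h] using hf0
    · have hk1 : k1 = 0 := by omega
      simp only [hk1, lt_irrefl, if_false, Nat.sub_zero]
      simp only [hk1] at hfk
      exact hg0.trans (hfk.symm.trans hf0)
  · have h : ¬ (k1 + k2 < k1) := by omega
    simp only [h, if_false]
    rw [show k1 + k2 - k1 = k2 from by omega, hgk]
  · intro i hi
    by_cases h1' : i + 1 < k1
    · have h2' : i < k1 := by omega
      simp only [h1', h2', if_true]
      obtain ⟨a, b, c, d⟩ := hstep i (by omega)
      exact ⟨a, b, c, d.trans hhi⟩
    · by_cases h2' : i < k1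
      · have hik : i + 1 = k1 := by omega
        simp only [h1', h2', if_true, if_false]
        rw [show i + 1 - k1 = 0 from by omega, hg0, ← hfk, ← hik]
        obtain ⟨a, b, c, d⟩ := hstep i (by omega)
        exact ⟨a, b, c, d.trans hhi⟩
      · simp only [h1', h2', if_false]
        rw [show i + 1 - k1 = (i - k1) + 1 from by omega]
        obtain ⟨a, b, c, d⟩ := hgstep (i - k1) (by omega)
        exact ⟨a, b, hlo.trans c, d⟩
  · intro i j hij hj
    by_cases hi' : i < k1
    · by_cases hj' : j < k1
      · simp only [hi', hj', if_true]
        exact hmono i j hij hj'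
      · simp only [hi', hj', if_true, if_false]
        have h1' := (hstep i hi').2.2.2
        have h2' := (hgstep (j - k1) (by omega)).2.2.1
        omega
    · have hj' : ¬ j < k1 := by omega
      simp only [hi', hj', if_false]
      exact hgmono (i - k1) (j - k1) (by omega) (by omega)

lemma lab_card_le_two (u v : V) : (lab E u v).card ≤ 2 := by
  rw [lab]
  split
  · exact (Finset.card_insert_le _ _).trans (by simp)
  · simp


lemma SameC.symm' {u v : V} (h : SameC E u v) : SameC E v u := ⟨h.2, h.1⟩

lemma SameC.trans' {u v w : V} (h1 : SameC E u v) (h2 : SameC E v w) :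
    SameC E u w := ⟨h1.1.trans h2.1, h2.2.trans h1.2⟩

lemma SameC.refl' (u : V) : SameC E u u := ⟨.refl, .refl⟩

/-- Ascending journey from `a` to the representative of its component. -/
lemma tj_ascent (a : V) :
    TJ E a (root E a) (t E a * (2 * Fintype.card V + 2))
      (t E a * (2 * Fintype.card V + 2) + Fintype.card V) := by
  set n := Fintype.card V with hn
  set r := root E a with hr
  have hra : SameC E r a := root_sameC a
  have hRar : Relation.ReflTransGen E a r := hra.2
  set k := dd E a r with hk
  have hkn : k < n := dd_lt_card hRar
  obtain ⟨f, hf0, hfk, hstep, hgeo⟩ := exists_geodesic hRar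
  have hscc : ∀ i ≤ k, SameC E a (f i) :=
    fun i hi => ⟨(hgeo i hi).2.1, ((hgeo i hi).2.2).trans hra.1⟩
  refine ⟨k, f, fun i => t E a * (2 * n + 2) + (n - (k - (i + 1))), hf0, hfk, ?_, ?_⟩
  · intro i hi
    refine ⟨hstep i hi, ?_, Nat.le_add_right _ _, ?_⟩
    swap
    · show t E a * (2 * n + 2) + (n - (k - (i + 1))) ≤ t E a * (2 * n + 2) + n
      omega
    have hsc : SameC E (f i) (f (i + 1)) := by
      refine ⟨Relation.ReflTransGen.single (hstep i hi), ?_⟩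
      exact ((hgeo (i + 1) (by omega)).2.2).trans (hra.1.trans (hgeo i (by omega)).2.1)
    have hroot : root E (f i) = root E a := root_eq ((hscc i (by omega)).symm')
    have ht : t E (f i) = t E a := t_eq_of_sameC ((hscc i (by omega)).symm')
    have hd : dd E (f (i + 1)) r = k - (i + 1) := (hgeo (i + 1) (by omega)).1.2
    show t E a * (2 * n + 2) + (n - (k - (i + 1))) ∈ _
    rw [lab, if_pos hsc, hroot, ht, ← hr, hd]
    exact Finset.mem_insert_self _ _
  · intro i j hij hj
    show t E a * (2 * n + 2) + (n - (k - (i + 1))) < t E a * (2 * n + 2) + (n - (k - (j + 1)))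
    omega

/-- Descending journey from the representative of the component of `a` to `b`. -/
lemma tj_descent {a b : V} (hab : SameC E a b) :
    TJ E (root E a) b (t E a * (2 * Fintype.card V + 2) + Fintype.card V + 1)
      (t E a * (2 * Fintype.card V + 2) + 2 * Fintype.card V) := by
  set n := Fintype.card V with hn
  set r := root E a with hr
  have hra : SameC E r a := root_sameC a
  have hRrb : Relation.ReflTransGen E r b := hra.1.trans hab.1
  set k := dd E r b with hk
  have hkn : k < n := dd_lt_card hRrb
  obtain ⟨f, hf0, hfk, hstep, hgeo⟩ := exists_geodesic hRrb
  have hscc : ∀ i ≤ k, SameC E a (f i) :=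
    fun i hi => ⟨hra.2.trans (hgeo i hi).2.1, ((hgeo i hi).2.2).trans hab.2⟩
  refine ⟨k, f, fun i => t E a * (2 * n + 2) + n + 1 + i, hf0, hfk, ?_, ?_⟩
  · intro i hi
    refine ⟨hstep i hi, ?_, ?_, ?_⟩
    · have hsc : SameC E (f i) (f (i + 1)) := by
        refine ⟨Relation.ReflTransGen.single (hstep i hi), ?_⟩
        exact ((hgeo (i + 1) (by omega)).2.2).trans
          (hab.2.trans (hra.2.trans (hgeo i (by omega)).2.1))
      have hroot : root E (f i) = root E a := root_eq ((hscc i (by omega)).symm')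
      have ht : t E (f i) = t E a := t_eq_of_sameC ((hscc i (by omega)).symm')
      have hd : dd E r (f i) = i := (hgeo i (by omega)).1.1
      show t E a * (2 * n + 2) + n + 1 + i ∈ _
      rw [lab, if_pos hsc, hroot, ht, ← hr, hd]
      exact Finset.mem_insert_of_mem (Finset.mem_singleton_self _)
    · show t E a * (2 * n + 2) + n + 1 ≤ t E a * (2 * n + 2) + n + 1 + i
      omega
    · show t E a * (2 * n + 2) + n + 1 + i ≤ t E a * (2 * n + 2) + 2 * n
      omega
  · intro i j hij hj
    show t E a * (2 * n + 2) + n + 1 + i < t E a * (2 * n + 2) + n + 1 + j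
    omega

/-- Journey within a strongly connected component. -/
lemma tj_sameC {a b : V} (hab : SameC E a b) :
    TJ E a b (t E a * (2 * Fintype.card V + 2))
      (t E a * (2 * Fintype.card V + 2) + 2 * Fintype.card V) :=
  (tj_ascent a).concat (tj_descent hab) (by omega) (by omega) (by omega)

lemma split_rtg {u v : V} (h : Relation.ReflTransGen E u v) :
    SameC E u v ∨ ∃ x y, SameC E u x ∧ E x y ∧ ¬ SameC E u y ∧
      Relation.ReflTransGen E y v := by
  induction h using Relation.ReflTransGen.head_induction_on with
  | refl => exact Or.inl (SameC.refl' v)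
  | head e hr ih =>
      rename_i a c
      by_cases hac : SameC E a c
      · rcases ih with h1 | ⟨x, y, h1, h2, h3, h4⟩
        · exact Or.inl (hac.trans' h1)
        · exact Or.inr ⟨x, y, hac.trans' h1, h2, fun hc => h3 ((hac.symm').trans' hc), h4⟩
      · exact Or.inr ⟨a, c, SameC.refl' a, e, hac, hr⟩

lemma tj_main (m : ℕ) : ∀ u v : V, t E v - t E u ≤ m →
    Relation.ReflTransGen E u v →
    TJ E u v (t E u * (2 * Fintype.card V + 2))
      (t E v * (2 * Fintype.card V + 2) + 2 * Fintype.card V) := by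
  induction m with
  | zero =>
      intro u v hm h
      have h1 := t_mono h
      have ht : t E u = t E v := by omega
      have hs : SameC E u v := ⟨h, rtg_of_t_eq h ht⟩
      rw [← ht]
      exact tj_sameC hs
  | succ m ih =>
      intro u v hm h
      set n := Fintype.card V with hn
      rcases split_rtg h with hs | ⟨x, y, hux, hxy, hnuy, hyv⟩
      · have ht := t_eq_of_sameC hs
        rw [← ht]
        exact tj_sameC hs
      · have htux : t E u = t E x := t_eq_of_sameC hux
        have hnxy : ¬ SameC E x y := fun hc => hnuy (hux.trans' hc)
        have hRxy : Relation.ReflTransGen E x y := Relation.ReflTransGen.single hxy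
        have htxy : t E x < t E y :=
          lt_of_le_of_ne (t_mono hRxy) (fun he => hnxy ⟨hRxy, rtg_of_t_eq hRxy he⟩)
        have htyv : t E y ≤ t E v := t_mono hyv
        have j1 : TJ E u x (t E u * (2 * n + 2)) (t E u * (2 * n + 2) + 2 * n) :=
          tj_sameC hux
        have hcrossmem : t E x * (2 * n + 2) + 2 * n + 1 ∈ lab E x y := by
          rw [lab, if_neg hnxy]
          exact Finset.mem_singleton_self _
        have j2 : TJ E x y (t E x * (2 * n + 2) + 2 * n + 1)
            (t E x * (2 * n + 2) + 2 * n + 1) := TJ.single hxy hcrossmem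
        rw [← htux] at j2
        have j3 : TJ E y v (t E y * (2 * n + 2)) (t E v * (2 * n + 2) + 2 * n) :=
          ih y v (by omega) hyv
        have c1 : TJ E u y (t E u * (2 * n + 2)) (t E u * (2 * n + 2) + 2 * n + 1) :=
          j1.concat j2 (by omega) (by omega) (by omega)
        have huy : (t E u + 1) * (2 * n + 2) ≤ t E y * (2 * n + 2) :=
          Nat.mul_le_mul_right _ (by omega)
        have hyvM : t E y * (2 * n + 2) ≤ t E v * (2 * n + 2) :=
          Nat.mul_le_mul_right _ htyv
        have hexp : (t E u + 1) * (2 * n + 2) = t E u * (2 * n + 2) + (2 * n + 2) := by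
          ring
        exact c1.concat j3 (by omega) (by omega) (by omega)

end TempReach

/-- For every digraph `G`, the temporality of `G` w.r.t. the reach property is at
most 2: there is a labeling assigning at most 2 labels to each edge such that,
for every ordered pair of vertices `(u, v)` with `v` reachable from `u`,
there is a journey from `u` to `v`. -/
theorem temporalityReach_le_two {V : Type*} [Fintype V] (E : V → V → Prop) :
    ∃ lab : V → V → Finset ℕ,
      (∀ u v, E u v → (lab u v).card ≤ 2) ∧
      ∀ u v : V, Relation.ReflTransGen E u v → Nonempty (Journey E lab u v) := by
  refine ⟨TempReach.lab E, fun u v _ => TempReach.lab_card_le_two u v, ?_⟩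
  intro u v h
  obtain ⟨k, f, l, hf0, hfk, hstep, hmono⟩ :=
    TempReach.tj_main (TempReach.t E v) u v (by omega) h
  refine ⟨⟨k, fun i => f i, fun i => l i, ?_, ?_, ?_, ?_, ?_⟩⟩
  · show f ((0 : Fin (k + 1)) : ℕ) = u
    rw [Fin.val_zero, hf0]
  · show f ((Fin.last k : Fin (k + 1)) : ℕ) = v
    rw [Fin.val_last, hfk]
  · intro i
    show E (f (i.castSucc : ℕ)) (f (i.succ : ℕ))
    rw [Fin.coe_castSucc, Fin.val_succ]
    exact (hstep i i.isLt).1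
  · intro i
    show l (i : ℕ) ∈ TempReach.lab E (f ((i.castSucc : Fin (k+1)) : ℕ)) (f ((i.succ : Fin (k+1)) : ℕ))
    rw [Fin.coe_castSucc, Fin.val_succ]
    exact (hstep i i.isLt).2.1
  · intro i j hij
    exact hmono i j hij j.isLt
end

section
/- If T is an undirected tree with diameter d(T), then there is a labeling of T using labels from {1, 2, …, d(T)} (hence of age at most d(T)) that assigns at most 2 labels to every (directed version of every) edge and preserves every simple path of T in both directions; that is, τ(T, all paths, d(T)) ≤ 2. -/
/-! Label the directed edge `u → v` by `d - h(u, v)`, where `h(u, v)` is the length of a longest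
path that starts at `v` and avoids `u`. Prepending `u` to such a path shows `h(u, v) < d`, so the
labels lie in `{1, …, d}`. In a tree, a path from `c` that avoids `b` also avoids every other
neighbour `a` of `b`, since otherwise it would close a cycle through `b`; prepending `b` then gives
`h(b, c) < h(a, b)`, so the labels strictly increase along every path. A single label per directed
edge therefore suffices. -/

open SimpleGraph

section Paths

variable {V : Type*}

lemma IsPath.cons {E : V → V → Prop} {k : ℕ} {w : Fin (k + 1) → V} (hw : IsPath E w) {u : V}
    (hu : E u (w 0)) (hmem : u ∉ Set.range w) : IsPath E (Fin.cons u w : Fin (k + 2) → V) := by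
  refine ⟨Fin.cons_injective_iff.2 ⟨hmem, hw.1⟩, fun i => ?_⟩
  induction i using Fin.cases with
  | zero => simpa using hu
  | succ j => simpa [← Fin.succ_castSucc] using hw.2 j

lemma exists_walk_of_chain {G : SimpleGraph V} {k : ℕ} {w : Fin (k + 1) → V}
    (hw : ∀ i : Fin k, G.Adj (w i.castSucc) (w i.succ)) (j : Fin (k + 1)) :
    ∃ p : G.Walk (w 0) (w j), ∀ x ∈ p.support, x ∈ Set.range w := by
  induction j using Fin.induction with
  | zero => exact ⟨.nil, by simp⟩
  | succ i ih =>
    obtain ⟨p, hp⟩ := ih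
    refine ⟨p.concat (hw i), fun x hx => ?_⟩
    rw [Walk.support_concat, List.mem_append, List.mem_singleton] at hx
    rcases hx with hx | rfl
    exacts [hp x hx, ⟨_, rfl⟩]

lemma SimpleGraph.IsAcyclic.notMem_range_of_adj {G : SimpleGraph V} (hG : G.IsAcyclic)
    {u v z : V} (huv : G.Adj u v) (hvz : G.Adj v z) (hzu : z ≠ u)
    {k : ℕ} {w : Fin (k + 1) → V} (hw : IsPath G.Adj w) (hw0 : w 0 = z)
    (hv : v ∉ Set.range w) : u ∉ Set.range w := by
  classical
  rintro ⟨j, rfl⟩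
  subst hw0
  obtain ⟨p, hp⟩ := exists_walk_of_chain hw.2 j
  let q : G.Path (w 0) (w j) :=
    ⟨.cons hvz.symm (.cons huv.symm .nil), by simp [hzu, hvz.ne', huv.ne']⟩
  have hq : v ∈ (q : G.Walk (w 0) (w j)).support := by simp [q]
  rw [(hG.subsingleton_path _ _).elim q p.toPath] at hq
  exact hv (hp v (p.support_toPath_subset_support hq))

end Paths

section BranchHeight

variable {V : Type*}

def pathLengths (E : V → V → Prop) : Set ℕ :=
  {k | ∃ w : Fin (k + 1) → V, IsPath E w}

def avoidingPathLengths (E : V → V → Prop) (u v : V) : Set ℕ :=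
  {k | ∃ w : Fin (k + 1) → V, IsPath E w ∧ w 0 = v ∧ u ∉ Set.range w}

noncomputable def branchHeight (E : V → V → Prop) (u v : V) : ℕ :=
  sSup (avoidingPathLengths E u v)

variable {E : V → V → Prop} {u v : V}

lemma avoidingPathLengths_subset_pathLengths (u v : V) :
    avoidingPathLengths E u v ⊆ pathLengths E :=
  fun _ ⟨w, hw, _⟩ => ⟨w, hw⟩

lemma branchHeight_mem (hb : BddAbove (pathLengths E)) (huv : u ≠ v) :
    branchHeight E u v ∈ avoidingPathLengths E u v :=
  Nat.sSup_mem ⟨0, fun _ => v, ⟨fun _ _ _ => Fin.ext (by omega), Fin.elim0⟩, rfl,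
    by simpa using huv⟩ (hb.mono (avoidingPathLengths_subset_pathLengths u v))

lemma le_branchHeight (hb : BddAbove (pathLengths E)) {k : ℕ}
    (hk : k ∈ avoidingPathLengths E u v) : k ≤ branchHeight E u v :=
  le_csSup (hb.mono (avoidingPathLengths_subset_pathLengths u v)) hk

lemma branchHeight_lt {d : ℕ} (hd : IsGreatest (pathLengths E) d) (huv : E u v) (hne : u ≠ v) :
    branchHeight E u v < d := by
  obtain ⟨w, hw, hw0, hu⟩ := branchHeight_mem ⟨d, hd.2⟩ hne
  exact hd.2 ⟨_, hw.cons (hw0 ▸ huv :) hu⟩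

lemma SimpleGraph.IsAcyclic.branchHeight_lt_branchHeight {G : SimpleGraph V} (hG : G.IsAcyclic)
    (hb : BddAbove (pathLengths G.Adj)) {z : V} (huv : G.Adj u v) (hvz : G.Adj v z)
    (hzu : z ≠ u) : branchHeight G.Adj v z < branchHeight G.Adj u v := by
  obtain ⟨w, hw, hw0, hv⟩ := branchHeight_mem hb hvz.ne
  have hu := hG.notMem_range_of_adj huv hvz hzu hw hw0 hv
  refine le_branchHeight hb ⟨_, hw.cons (hw0 ▸ hvz :) hv, rfl, ?_⟩
  rintro ⟨j, hj⟩
  induction j using Fin.cases with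
  | zero => exact huv.ne hj.symm
  | succ j => exact hu ⟨j, hj⟩

end BranchHeight

section Labeling

variable {V : Type*}

open Classical in
noncomputable def branchLabeling (E : V → V → Prop) (d : ℕ) (u v : V) : Finset ℕ :=
  if E u v then {d - branchHeight E u v} else ∅

variable {E : V → V → Prop} {d : ℕ} {u v : V}

lemma mem_branchLabeling {t : ℕ} :
    t ∈ branchLabeling E d u v ↔ E u v ∧ t = d - branchHeight E u v := by
  unfold branchLabeling
  split_ifs with h <;> simp [h]

lemma card_branchLabeling_le_one : (branchLabeling E d u v).card ≤ 1 :=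
  Finset.card_le_one.2 fun _ ha _ hb =>
    (mem_branchLabeling.1 ha).2.trans (mem_branchLabeling.1 hb).2.symm

lemma SimpleGraph.IsAcyclic.preservesAll_branchLabeling {G : SimpleGraph V} (hG : G.IsAcyclic)
    (hd : IsGreatest (pathLengths G.Adj) d) : PreservesAll G.Adj (branchLabeling G.Adj d) := by
  intro k w hw
  refine ⟨fun i => d - branchHeight G.Adj (w i.castSucc) (w i.succ), ?_,
    fun i => mem_branchLabeling.2 ⟨hw.2 i, rfl⟩⟩
  cases k with
  | zero => exact fun i => i.elim0
  | succ m =>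
    refine Fin.strictMono_iff_lt_succ.2 fun i => ?_
    have hab := hw.2 i.castSucc
    have hbc := hw.2 i.succ
    rw [Fin.succ_castSucc] at hab
    have hca : w i.succ.succ ≠ w i.castSucc.castSucc :=
      hw.1.ne (Fin.ne_of_val_ne (by simp; omega))
    have hcb := hG.branchHeight_lt_branchHeight ⟨d, hd.2⟩ hab hbc hca
    have hbd := branchHeight_lt hd hab hab.ne
    simp only [Fin.succ_castSucc]
    omega

end Labeling

theorem tree_temporality_all_paths_age_diameter_le_two_general {V : Type*}
    (T : SimpleGraph V) (ht : T.IsTree) (d : ℕ)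
    (hd : IsGreatest {k | ∃ w : Fin (k + 1) → V, IsPath T.Adj w} d) :
    ∃ lab : V → V → Finset ℕ,
      (∀ u v, ∀ t ∈ lab u v, 1 ≤ t ∧ t ≤ d) ∧
      (∀ u v, T.Adj u v → (lab u v).card ≤ 2) ∧
      PreservesAll T.Adj lab := by
  refine ⟨branchLabeling T.Adj d, fun u v t hmem => ?_, fun u v _ => ?_,
    ht.isAcyclic.preservesAll_branchLabeling hd⟩
  · obtain ⟨huv, rfl⟩ := mem_branchLabeling.1 hmem
    have := branchHeight_lt hd huv huv.ne
    omega
  · exact card_branchLabeling_le_one.trans one_le_two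

/-- If `T` is an undirected tree with diameter `d` (the number of edges of a
longest simple path of `T`), then τ(T, all paths, d) ≤ 2: there is a labeling,
using labels from `{1, …, d}` (hence of age at most `d`) and assigning at most 2
labels to each direction of each edge, that preserves every simple path of `T`
in both directions. -/
theorem tree_temporality_all_paths_age_diameter_le_two {V : Type*} [Fintype V]
    (T : SimpleGraph V) (ht : T.IsTree) (d : ℕ)
    (hd : IsGreatest {k | ∃ w : Fin (k + 1) → V, IsPath T.Adj w} d) :
    ∃ lab : V → V → Finset ℕ,
      (∀ u v, ∀ t ∈ lab u v, 1 ≤ t ∧ t ≤ d) ∧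
      (∀ u v, T.Adj u v → (lab u v).card ≤ 2) ∧
      PreservesAll T.Adj lab :=
  tree_temporality_all_paths_age_diameter_le_two_general T ht d hd
end

section
/- Let G be the directed ring (directed cycle) on n vertices and let the age be restricted to α = (n−1) + k, where 1 ≤ k ≤ n−1. Then ⌊(n−1)/(k+1)⌋ + 1 ≤ τ(G, all paths, α) ≤ ⌈n/(k+1)⌉ + 1; in particular τ(G, all paths, α) = Θ(n/k). -/
private lemma fin_strictMono_add_le {N : ℕ} {l : Fin N → ℕ} (h : StrictMono l) :
    ∀ (d : ℕ) (i j : Fin N), (j : ℕ) = (i : ℕ) + d → l i + d ≤ l j := by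
  intro d
  induction d with
  | zero =>
    intro i j hij
    have : i = j := Fin.ext (by omega)
    subst this; omega
  | succ d ih =>
    intro i j hij
    have hjd : (i : ℕ) + d < N := by have := j.isLt; omega
    have h1 := ih i ⟨(i : ℕ) + d, hjd⟩ rfl
    have h2 : l ⟨(i : ℕ) + d, hjd⟩ < l j := h (by simp only [Fin.lt_def]; omega)
    omega

private lemma mod_succ_eq {n : ℕ} (hn : 2 ≤ n) (x : ℕ) : (x % n + 1) % n = (x + 1) % n := by
  conv_rhs => rw [Nat.add_mod]
  rw [Nat.mod_eq_of_lt hn]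

private def nxtV (n : ℕ) (hn : 2 ≤ n) (v : Fin n) : Fin n :=
  ⟨((v : ℕ) + 1) % n, Nat.mod_lt _ (by omega)⟩

private lemma ring_getPath {n : ℕ} (hn : 2 ≤ n) (lab : Fin n → Fin n → Finset ℕ)
    (hpres : PreservesAll (ringAdj n) lab) (s : ℕ) (hs : s < n) :
    ∃ l : Fin (n - 1) → ℕ, StrictMono l ∧
      ∀ m : Fin (n - 1), ∃ u : Fin n,
        (u : ℕ) = (s + (m : ℕ)) % n ∧ l m ∈ lab u (nxtV n hn u) := by
  set w : Fin ((n - 1) + 1) → Fin n :=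
    fun m => ⟨(s + (m : ℕ)) % n, Nat.mod_lt _ (by omega)⟩ with hw
  have hpath : IsPath (ringAdj n) w := by
    constructor
    · intro m₁ m₂ hm
      have hv : (s + (m₁ : ℕ)) % n = (s + (m₂ : ℕ)) % n := congrArg Fin.val hm
      have h2 : (m₁ : ℕ) ≡ (m₂ : ℕ) [MOD n] := Nat.ModEq.add_left_cancel' s hv
      have e1 : (m₁ : ℕ) % n = (m₂ : ℕ) % n := h2
      have l1 : (m₁ : ℕ) < n := by have := m₁.isLt; omega
      have l2 : (m₂ : ℕ) < n := by have := m₂.isLt; omega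
      apply Fin.ext
      rwa [Nat.mod_eq_of_lt l1, Nat.mod_eq_of_lt l2] at e1
    · intro i
      show (s + ((i : ℕ) + 1)) % n = ((s + (i : ℕ)) % n + 1) % n
      rw [mod_succ_eq hn, Nat.add_assoc]
  obtain ⟨l, hmono, hmem⟩ := hpres (n - 1) w hpath
  refine ⟨l, hmono, fun m => ⟨w m.castSucc, rfl, ?_⟩⟩
  have hv : w m.succ = nxtV n hn (w m.castSucc) := by
    apply Fin.ext
    show (s + ((m : ℕ) + 1)) % n = ((s + (m : ℕ)) % n + 1) % n
    rw [mod_succ_eq hn, Nat.add_assoc]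
  rw [← hv]
  exact hmem m

private lemma ring_lower {n k : ℕ} (hk1 : 1 ≤ k) (hk2 : k ≤ n - 1) (hn : 2 ≤ n)
    (lab : Fin n → Fin n → Finset ℕ) (a : ℕ)
    (hage : ∀ i j : Fin n, ringAdj n i j → ∀ t ∈ lab i j, a ≤ t ∧ t + 1 ≤ a + (n - 1 + k))
    (hpres : PreservesAll (ringAdj n) lab) :
    ∃ i j : Fin n, ringAdj n i j ∧ (n - 1) / (k + 1) + 1 ≤ (lab i j).card := by
  classical
  have hadj : ∀ v : Fin n, ringAdj n v (nxtV n hn v) := fun v => rfl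
  set S : Finset ℕ := Finset.univ.biUnion (fun v : Fin n => lab v (nxtV n hn v)) with hS
  have hz : (0 : ℕ) < n - 1 := by omega
  obtain ⟨l0, hl0mono, hl0mem⟩ := ring_getPath hn lab hpres 0 (by omega)
  obtain ⟨u0, hu0, hmem0⟩ := hl0mem ⟨0, hz⟩
  have hSne : S.Nonempty :=
    ⟨l0 ⟨0, hz⟩, Finset.mem_biUnion.mpr ⟨u0, Finset.mem_univ _, hmem0⟩⟩
  set A := S.min' hSne with hA
  have hAS : A ∈ S := S.min'_mem hSne
  have hAle : ∀ t ∈ S, A ≤ t := fun t ht => S.min'_le t ht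
  obtain ⟨istar, -, hAT⟩ := Finset.mem_biUnion.mp hAS
  have haA : a ≤ A := (hage istar (nxtV n hn istar) (hadj istar) A hAT).1
  set T := lab istar (nxtV n hn istar) with hT
  -- window lemma
  have hwin : ∀ jj : ℕ, jj < n - 1 → ∃ t, t ∈ T ∧ A + jj ≤ t ∧ t ≤ a + k + jj := by
    intro jj hjj
    obtain ⟨l, hmono, hmemp⟩ := ring_getPath hn lab hpres
      (((istar : ℕ) + (n - jj)) % n) (Nat.mod_lt _ (by omega))
    obtain ⟨u, hu, hmem⟩ := hmemp ⟨jj, hjj⟩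
    have huI : u = istar := by
      apply Fin.ext
      rw [hu, Nat.mod_add_mod]
      have e : (istar : ℕ) + (n - jj) + jj = (istar : ℕ) + n := by omega
      rw [e, Nat.add_mod_right, Nat.mod_eq_of_lt istar.isLt]
    rw [huI] at hmem
    -- lower bound for l ⟨jj, hjj⟩
    obtain ⟨u1, hu1, hm1⟩ := hmemp ⟨0, hz⟩
    have hAl0 : A ≤ l ⟨0, hz⟩ :=
      hAle _ (Finset.mem_biUnion.mpr ⟨u1, Finset.mem_univ _, hm1⟩)
    have hlow : l ⟨0, hz⟩ + jj ≤ l ⟨jj, hjj⟩ :=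
      fin_strictMono_add_le hmono jj ⟨0, hz⟩ ⟨jj, hjj⟩ (by simp)
    -- upper bound
    have he : n - 2 < n - 1 := by omega
    obtain ⟨u2, hu2, hm2⟩ := hmemp ⟨n - 2, he⟩
    have hup2 : l ⟨n - 2, he⟩ + 1 ≤ a + (n - 1 + k) :=
      (hage u2 (nxtV n hn u2) (hadj u2) _ hm2).2
    have hup : l ⟨jj, hjj⟩ + (n - 2 - jj) ≤ l ⟨n - 2, he⟩ :=
      fin_strictMono_add_le hmono (n - 2 - jj) ⟨jj, hjj⟩ ⟨n - 2, he⟩ (by simp; omega)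
    exact ⟨l ⟨jj, hjj⟩, hmem, by omega, by omega⟩
  -- counting
  have hwin' : ∀ jj : ℕ, ∃ t, jj < n - 1 → (t ∈ T ∧ A + jj ≤ t ∧ t ≤ a + k + jj) := by
    intro jj
    by_cases h : jj < n - 1
    · obtain ⟨t, ht⟩ := hwin jj h; exact ⟨t, fun _ => ht⟩
    · exact ⟨0, fun hc => absurd hc h⟩
  choose f hf using hwin'
  have hsub : Finset.range (n - 1) ⊆
      T.biUnion (fun t => (Finset.range (n - 1)).filter (fun j => f j = t)) := by
    intro j hj
    exact Finset.mem_biUnion.mpr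
      ⟨f j, (hf j (Finset.mem_range.mp hj)).1, Finset.mem_filter.mpr ⟨hj, rfl⟩⟩
  have hcard1 : n - 1 ≤ ∑ t ∈ T, ((Finset.range (n - 1)).filter (fun j => f j = t)).card := by
    calc n - 1 = (Finset.range (n - 1)).card := (Finset.card_range _).symm
    _ ≤ _ := le_trans (Finset.card_le_card hsub) Finset.card_biUnion_le
  have hfibA : ((Finset.range (n - 1)).filter (fun j => f j = A)).card ≤ 1 := by
    have hss : ((Finset.range (n - 1)).filter (fun j => f j = A)) ⊆ {0} := by
      intro j hj
      obtain ⟨hj1, hj2⟩ := Finset.mem_filter.mp hj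
      have hj3 := hf j (Finset.mem_range.mp hj1)
      have : j = 0 := by omega
      simp [this]
    calc _ ≤ ({0} : Finset ℕ).card := Finset.card_le_card hss
    _ = 1 := rfl
  have hfib : ∀ t ∈ T.erase A,
      ((Finset.range (n - 1)).filter (fun j => f j = t)).card ≤ k + 1 := by
    intro t ht
    have htT : t ∈ T := (Finset.mem_erase.mp ht).2
    have hAt : A ≤ t := hAle t (Finset.mem_biUnion.mpr ⟨istar, Finset.mem_univ _, htT⟩)
    have hsub2 : ((Finset.range (n - 1)).filter (fun j => f j = t)) ⊆
        Finset.Icc (t - (a + k)) (t - A) := by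
      intro j hj
      obtain ⟨hj1, hj2⟩ := Finset.mem_filter.mp hj
      have hj3 := hf j (Finset.mem_range.mp hj1)
      rw [hj2] at hj3
      exact Finset.mem_Icc.mpr ⟨by omega, by omega⟩
    calc _ ≤ (Finset.Icc (t - (a + k)) (t - A)).card := Finset.card_le_card hsub2
    _ = (t - A) + 1 - (t - (a + k)) := by rw [Nat.card_Icc]
    _ ≤ k + 1 := by omega
  have hATcard : 1 ≤ T.card := Finset.card_pos.mpr ⟨A, hAT⟩
  have hsum : ∑ t ∈ T, ((Finset.range (n - 1)).filter (fun j => f j = t)).card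
      ≤ 1 + (T.card - 1) * (k + 1) := by
    rw [← Finset.add_sum_erase T _ hAT]
    have h2 : ∑ t ∈ T.erase A, ((Finset.range (n - 1)).filter (fun j => f j = t)).card
        ≤ ∑ _t ∈ T.erase A, (k + 1) := Finset.sum_le_sum hfib
    rw [Finset.sum_const, smul_eq_mul, Finset.card_erase_of_mem hAT] at h2
    omega
  have hfinal : n - 1 ≤ 1 + (T.card - 1) * (k + 1) := le_trans hcard1 hsum
  refine ⟨istar, nxtV n hn istar, hadj istar, ?_⟩
  show (n - 1) / (k + 1) + 1 ≤ T.card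
  have hq : 0 < k + 1 := by omega
  have hdle : (n - 1) / (k + 1) ≤ T.card - 1 := by
    rw [Nat.div_le_iff_le_mul_add_pred hq, Nat.mul_comm]
    omega
  omega

private lemma ring_upper {n k : ℕ} (hk1 : 1 ≤ k) (hk2 : k ≤ n - 1) (hn : 2 ≤ n) :
    ∃ (lab : Fin n → Fin n → Finset ℕ) (a : ℕ),
      (∀ i j : Fin n, ringAdj n i j → ∀ t ∈ lab i j, a ≤ t ∧ t + 1 ≤ a + (n - 1 + k)) ∧
      PreservesAll (ringAdj n) lab ∧
      ∀ i j : Fin n, ringAdj n i j → (lab i j).card ≤ (n + k) / (k + 1) + 1 := by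
  classical
  refine ⟨fun v _ => (Finset.range ((n - 1) / (k + 1) + 2)).image (fun t =>
      if t ≤ (v : ℕ) / (k + 1) then (v : ℕ) - t * (k + 1)
      else min ((v : ℕ) + n - (t - 1) * (k + 1)) (n + k - 2)), 0, ?_, ?_, ?_⟩
  · intro i j _ t ht
    obtain ⟨t', -, rfl⟩ := Finset.mem_image.mp ht
    refine ⟨Nat.zero_le _, ?_⟩
    split
    · have h1 : (i : ℕ) < n := i.isLt
      have h2 : (i : ℕ) - t' * (k + 1) ≤ (i : ℕ) := Nat.sub_le _ _
      omega
    · have := min_le_right ((i : ℕ) + n - (t' - 1) * (k + 1)) (n + k - 2)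
      omega
  · intro L w hw
    obtain ⟨hinj, hstep⟩ := hw
    have hs : (w 0 : ℕ) < n := (w 0).isLt
    have hcard : L + 1 ≤ n := by
      have := Fintype.card_le_of_injective w hinj
      simpa using this
    set s : ℕ := (w 0 : ℕ) with hs0
    have hval : ∀ mv : ℕ, ∀ hm : mv < L + 1, (w ⟨mv, hm⟩ : ℕ) = (s + mv) % n := by
      intro mv
      induction mv with
      | zero =>
        intro hm
        have e0 : (⟨0, hm⟩ : Fin (L + 1)) = 0 := by apply Fin.ext; simp
        have e1 : (s + 0) % n = s := by rw [Nat.add_zero]; exact Nat.mod_eq_of_lt hs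
        rw [e0, e1]
      | succ j ih =>
        intro hm
        have hjL : j < L := by omega
        have e1 : (w (Fin.succ ⟨j, hjL⟩) : ℕ) = ((w (Fin.castSucc ⟨j, hjL⟩) : ℕ) + 1) % n :=
          hstep ⟨j, hjL⟩
        have e2 : Fin.succ (⟨j, hjL⟩ : Fin L) = (⟨j + 1, hm⟩ : Fin (L + 1)) := rfl
        have e3 : Fin.castSucc (⟨j, hjL⟩ : Fin L) = (⟨j, by omega⟩ : Fin (L + 1)) := rfl
        rw [e2, e3, ih (by omega)] at e1
        rw [e1, mod_succ_eq hn, Nat.add_assoc]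
    obtain ⟨c, hc⟩ : ∃ c, c = s / (k + 1) * (k + 1) := ⟨_, rfl⟩
    have hcs : c ≤ s := hc ▸ Nat.div_mul_le_self s (k + 1)
    have hsck : s ≤ c + k := by
      have h1 := Nat.div_add_mod' s (k + 1)
      have h2 : s % (k + 1) < k + 1 := Nat.mod_lt _ (by omega)
      rw [← hc] at h1
      omega
    refine ⟨fun m : Fin L => (s - c) + (m : ℕ), ?_, ?_⟩
    · intro m1 m2 hlt
      exact Nat.add_lt_add_left (Fin.lt_def.mp hlt) _
    · intro m
      have hmval : (w m.castSucc : ℕ) = (s + (m : ℕ)) % n := hval (m : ℕ) (by omega)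
      have hm2 : (m : ℕ) ≤ n - 2 := by have := m.isLt; omega
      show _ ∈ (Finset.range ((n - 1) / (k + 1) + 2)).image _
      rw [Finset.mem_image]
      by_cases hcase : s + (m : ℕ) < n
      · have hv : (w m.castSucc : ℕ) = s + (m : ℕ) := by rw [hmval, Nat.mod_eq_of_lt hcase]
        refine ⟨s / (k + 1), Finset.mem_range.mpr ?_, ?_⟩
        · have h1 : s / (k + 1) ≤ (n - 1) / (k + 1) := Nat.div_le_div_right (by omega)
          omega
        · show (if s / (k + 1) ≤ ((w m.castSucc : Fin n) : ℕ) / (k + 1)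
              then ((w m.castSucc : Fin n) : ℕ) - s / (k + 1) * (k + 1)
              else min (((w m.castSucc : Fin n) : ℕ) + n - (s / (k + 1) - 1) * (k + 1))
                (n + k - 2)) = s - c + (m : ℕ)
          rw [hv, if_pos (Nat.div_le_div_right (Nat.le_add_right s (m : ℕ))), ← hc]
          omega
      · have hnle : n ≤ s + (m : ℕ) := by omega
        have hv : (w m.castSucc : ℕ) = s + (m : ℕ) - n := by
          rw [hmval, Nat.mod_eq_sub_mod hnle, Nat.mod_eq_of_lt (by omega)]
        refine ⟨s / (k + 1) + 1, Finset.mem_range.mpr ?_, ?_⟩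
        · have h1 : s / (k + 1) ≤ (n - 1) / (k + 1) := Nat.div_le_div_right (by omega)
          omega
        · show (if s / (k + 1) + 1 ≤ ((w m.castSucc : Fin n) : ℕ) / (k + 1)
              then ((w m.castSucc : Fin n) : ℕ) - (s / (k + 1) + 1) * (k + 1)
              else min (((w m.castSucc : Fin n) : ℕ) + n - (s / (k + 1) + 1 - 1) * (k + 1))
                (n + k - 2)) = s - c + (m : ℕ)
          have hcond : ¬ (s / (k + 1) + 1 ≤ (s + (m : ℕ) - n) / (k + 1)) := by
            have h3 : (s + (m : ℕ) - n) / (k + 1) ≤ s / (k + 1) :=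
              Nat.div_le_div_right (by omega)
            omega
          rw [hv, if_neg hcond, Nat.add_sub_cancel, ← hc]
          have he : s + (m : ℕ) - n + n = s + (m : ℕ) := by omega
          rw [he, Nat.min_eq_left (by omega)]
          omega
  · intro i j _
    calc ((Finset.range ((n - 1) / (k + 1) + 2)).image _).card
        ≤ (n - 1) / (k + 1) + 2 :=
          le_trans Finset.card_image_le (le_of_eq (Finset.card_range _))
    _ ≤ (n + k) / (k + 1) + 1 := by
        have h1 : (n - 1 + (k + 1)) / (k + 1) = (n - 1) / (k + 1) + 1 :=
          Nat.add_div_right _ (by omega)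
        have h2 : n - 1 + (k + 1) = n + k := by omega
        rw [h2] at h1
        omega

/-- Trade-off between temporality and age on the directed ring: with the age
restricted to `α = (n - 1) + k` where `1 ≤ k ≤ n - 1`, the temporality w.r.t.
the all-paths property is between `⌊(n-1)/(k+1)⌋ + 1` and `⌈n/(k+1)⌉ + 1`
(so it is `Θ(n/k)`). A labeling has age at most `α` iff all its labels lie in
a window `{t | a ≤ t ∧ t + 1 ≤ a + α}` for some common shift `a`; here
`⌈n/(k+1)⌉` is written as `(n + k) / (k + 1)` in natural division. -/
theorem ring_temporality_age_tradeoff (n k : ℕ) (hk1 : 1 ≤ k) (hk2 : k ≤ n - 1) :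
    (∃ (lab : Fin n → Fin n → Finset ℕ) (a : ℕ),
      (∀ i j : Fin n, ringAdj n i j → ∀ t ∈ lab i j, a ≤ t ∧ t + 1 ≤ a + (n - 1 + k)) ∧
      PreservesAll (ringAdj n) lab ∧
      ∀ i j : Fin n, ringAdj n i j → (lab i j).card ≤ (n + k) / (k + 1) + 1) ∧
    ∀ (lab : Fin n → Fin n → Finset ℕ) (a : ℕ),
      (∀ i j : Fin n, ringAdj n i j → ∀ t ∈ lab i j, a ≤ t ∧ t + 1 ≤ a + (n - 1 + k)) →
      PreservesAll (ringAdj n) lab →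
      ∃ i j : Fin n, ringAdj n i j ∧ (n - 1) / (k + 1) + 1 ≤ (lab i j).card := by
  have hn : 2 ≤ n := by omega
  exact ⟨ring_upper hk1 hk2 hn,
    fun lab a hage hpres => ring_lower hk1 hk2 hn lab a hage hpres⟩
end

section
/- Let φ₁ be a 2-CNF formula with m clauses, each clause being a disjunction of two literals over distinct variables. Let φ₂ be the 2-CNF formula obtained from φ₁ by replacing every clause α = (ℓ₁ ∨ ℓ₂) of φ₁ with the conjunction of the three clauses (ℓ₁ ∨ x_α), (ℓ₂ ∨ y_α), (x_α ∨ y_α), where x_α and y_α are fresh variables introduced for the clause α. Then the maximum, over truth assignments, of the number of XOR-satisfied clauses of φ₂ equals the maximum, over truth assignments, of the number of XOR-satisfied clauses of φ₁, plus 2m. -/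
/-- A literal over the variable type `α`: a variable together with a negation flag
(`true` means the variable appears negated). -/
abbrev Lit (α : Type*) := α × Bool

/-- The truth value of a literal under the truth assignment `τ`. -/
def evalLit {α : Type*} (τ : α → Bool) (l : Lit α) : Bool := xor (τ l.1) l.2

/-- The number of clauses of the 2-CNF formula `φ` (a family of clauses, each a
pair of literals) that are XOR-satisfied by the truth assignment `τ`: a clause is
XOR-satisfied if exactly one of its two literals is true under `τ`. -/
def countXorSat {α ι : Type*} [Fintype ι] (φ : ι → Lit α × Lit α) (τ : α → Bool) : ℕ :=
  (Finset.univ.filter fun j => evalLit τ (φ j).1 ≠ evalLit τ (φ j).2).card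

/-- The formula `φ₂` obtained from a 2-CNF formula `φ₁` with `m` clauses by
replacing each clause `α = (ℓ₁ ∨ ℓ₂)` (clause index `j`) with the three clauses
`(ℓ₁ ∨ x_α)`, `(ℓ₂ ∨ y_α)`, `(x_α ∨ y_α)`, where `x_α = Sum.inr (j, false)` and
`y_α = Sum.inr (j, true)` are fresh variables for the clause `α`. -/
def xorExpand {α : Type*} {m : ℕ} (φ : Fin m → Lit α × Lit α) :
    Fin m × Fin 3 → Lit (α ⊕ Fin m × Bool) × Lit (α ⊕ Fin m × Bool) :=
  fun p =>
    if p.2 = 0 then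
      ((Sum.inl (φ p.1).1.1, (φ p.1).1.2), (Sum.inr (p.1, false), false))
    else if p.2 = 1 then
      ((Sum.inl (φ p.1).2.1, (φ p.1).2.2), (Sum.inr (p.1, true), false))
    else
      ((Sum.inr (p.1, false), false), (Sum.inr (p.1, true), false))

/-!
In the gadget for a clause `(ℓ₁ ∨ ℓ₂)` the three clauses `(ℓ₁ ∨ x)`, `(x ∨ y)`, `(y ∨ ℓ₂)` form a
path from `ℓ₁` to `ℓ₂`, and the XORs along the path add up to `ℓ₁ ⊕ ℓ₂`. So when `ℓ₁ = ℓ₂` an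
even number, hence at most two, of the gadget clauses are XOR-satisfied, and at most three
otherwise: the gadget contributes at most `[ℓ₁ ≠ ℓ₂] + 2`. Setting `x := ¬ℓ₁`, `y := ℓ₁` attains
this bound, so every assignment of `φ₁` extends to one of `φ₂` gaining exactly `2m`.
-/

open Finset

lemma xor_gadget_le (a b x y : Bool) :
    ((if a ≠ x then 1 else 0) + (if b ≠ y then 1 else 0) + (if x ≠ y then 1 else 0) : ℕ) ≤
      (if a ≠ b then 1 else 0) + 2 := by
  cases a <;> cases b <;> cases x <;> cases y <;> decide

lemma xor_gadget_not_self (a b : Bool) :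
    ((if a ≠ !a then 1 else 0) + (if b ≠ a then 1 else 0) + (if (!a) ≠ a then 1 else 0) : ℕ) =
      (if a ≠ b then 1 else 0) + 2 := by
  cases a <;> cases b <;> decide

lemma countXorSat_eq_sum {α ι : Type*} [Fintype ι] (φ : ι → Lit α × Lit α) (τ : α → Bool) :
    countXorSat φ τ = ∑ j, if evalLit τ (φ j).1 ≠ evalLit τ (φ j).2 then 1 else 0 :=
  card_filter _ _

lemma countXorSat_le_card {α ι : Type*} [Fintype ι] (φ : ι → Lit α × Lit α) (τ : α → Bool) :
    countXorSat φ τ ≤ Fintype.card ι :=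
  card_filter_le _ _

section Expand

variable {α : Type*} {m : ℕ} (φ : Fin m → Lit α × Lit α)

lemma countXorSat_xorExpand (τ : α ⊕ Fin m × Bool → Bool) :
    countXorSat (xorExpand φ) τ =
      ∑ j : Fin m,
        ((if evalLit (τ ∘ Sum.inl) (φ j).1 ≠ τ (Sum.inr (j, false)) then 1 else 0) +
         (if evalLit (τ ∘ Sum.inl) (φ j).2 ≠ τ (Sum.inr (j, true)) then 1 else 0) +
         (if τ (Sum.inr (j, false)) ≠ τ (Sum.inr (j, true)) then 1 else 0)) := by
  rw [countXorSat_eq_sum, Fintype.sum_prod_type]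
  refine sum_congr rfl fun j _ => ?_
  rw [Fin.sum_univ_three]
  simp only [xorExpand, evalLit, Function.comp_apply, Fin.isValue, Fin.reduceEq, ↓reduceIte,
    Bool.xor_false]
  rfl

lemma countXorSat_xorExpand_le (τ : α ⊕ Fin m × Bool → Bool) :
    countXorSat (xorExpand φ) τ ≤ countXorSat φ (τ ∘ Sum.inl) + 2 * m := by
  rw [countXorSat_xorExpand, countXorSat_eq_sum]
  calc _ ≤ ∑ j : Fin m,
          ((if evalLit (τ ∘ Sum.inl) (φ j).1 ≠ evalLit (τ ∘ Sum.inl) (φ j).2 then 1 else 0) + 2) :=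
        sum_le_sum fun j _ => xor_gadget_le _ _ _ _
    _ = _ := by simp [sum_add_distrib, mul_comm]

def gadgetExtend (τ : α → Bool) : α ⊕ Fin m × Bool → Bool :=
  Sum.elim τ fun p => if p.2 then evalLit τ (φ p.1).1 else !evalLit τ (φ p.1).1

lemma countXorSat_xorExpand_gadgetExtend (τ : α → Bool) :
    countXorSat (xorExpand φ) (gadgetExtend φ τ) = countXorSat φ τ + 2 * m := by
  rw [countXorSat_xorExpand, countXorSat_eq_sum]
  simp only [gadgetExtend, Sum.elim_comp_inl, Sum.elim_inr, if_true, Bool.false_eq_true,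
    if_false, xor_gadget_not_self]
  simp [sum_add_distrib, mul_comm]

end Expand

lemma sSup_range_eq_add {A B : Type*} [Nonempty A] (f : A → ℕ) (g : B → ℕ) (c : ℕ)
    (hf : BddAbove (Set.range f)) (hle : ∀ b, ∃ a, g b ≤ f a + c)
    (hge : ∀ a, ∃ b, g b = f a + c) :
    sSup (Set.range g) = sSup (Set.range f) + c := by
  have hf_le (a : A) : f a ≤ sSup (Set.range f) := le_csSup hf ⟨a, rfl⟩
  have hg_le (b : B) : g b ≤ sSup (Set.range f) + c := by
    obtain ⟨a, ha⟩ := hle b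
    exact ha.trans (Nat.add_le_add_right (hf_le a) c)
  have hg_bdd : ∀ y ∈ Set.range g, y ≤ sSup (Set.range f) + c := Set.forall_mem_range.2 hg_le
  obtain ⟨a₀, ha₀⟩ := Nat.sSup_mem (Set.range_nonempty f) hf
  obtain ⟨b₀, hb₀⟩ := hge a₀
  exact le_antisymm (csSup_le ⟨g b₀, b₀, rfl⟩ hg_bdd)
    (le_csSup ⟨_, hg_bdd⟩ ⟨b₀, by rw [hb₀, ha₀]⟩)

theorem maxXorSat_expand_general {α : Type*} (m : ℕ) (φ₁ : Fin m → Lit α × Lit α) :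
    sSup {n | ∃ τ : α ⊕ Fin m × Bool → Bool, countXorSat (xorExpand φ₁) τ = n} =
      sSup {n | ∃ τ : α → Bool, countXorSat φ₁ τ = n} + 2 * m :=
  sSup_range_eq_add _ _ _
    ⟨m, by rintro _ ⟨τ, rfl⟩; simpa using countXorSat_le_card φ₁ τ⟩
    (fun τ => ⟨τ ∘ Sum.inl, countXorSat_xorExpand_le φ₁ τ⟩)
    (fun τ => ⟨gadgetExtend φ₁ τ, countXorSat_xorExpand_gadgetExtend φ₁ τ⟩)

/-- If every clause of the 2-CNF formula `φ₁` has its two literals on distinct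
variables, then the maximum number of simultaneously XOR-satisfiable clauses of
the expanded formula `φ₂` equals the maximum number of simultaneously
XOR-satisfiable clauses of `φ₁`, plus `2m`. -/
theorem maxXorSat_expand {α : Type*} (m : ℕ) (φ₁ : Fin m → Lit α × Lit α)
    (hdistinct : ∀ j, ((φ₁ j).1).1 ≠ ((φ₁ j).2).1) :
    sSup {n | ∃ τ : α ⊕ Fin m × Bool → Bool, countXorSat (xorExpand φ₁) τ = n} =
      sSup {n | ∃ τ : α → Bool, countXorSat φ₁ τ = n} + 2 * m :=
  maxXorSat_expand_general m φ₁
end
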